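/- arXiv:1708.02662 — 12 statements merged into one kernel-verified Lean document; each statement's English description precedes it below -/
import Mathlib

section
/- For every d ≥ 1 and every deterministic online unit covering algorithm on ℝ^d under the L∞ norm, there exists a finite sequence σ = (p₁,…,p_{2^d}) of 2^d points in ℝ^d, all contained in a single unit cube (so the offline optimum for σ is 1), on which the algorithm's cost is at least 2^d. Hence the competitive ratio of every deterministic online algorithm for Unit Covering in ℝ^d under L∞ is at least 2^d. -/
/-- `p` lies in the unit cube `c + [0,1]^d` (L∞). -/
def InCube {d : ℕ} (c p : Fin d → ℝ) : Prop := ∀ j, c j ≤ p j ∧ p j ≤ c j + 1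

/-- For every `d ≥ 1` and every deterministic online unit covering algorithm on `ℝ^d`
(under the L∞ norm), there is a sequence of `2^d` points contained in a single unit
cube (so the offline optimum is 1) on which the algorithm places at least `2^d` cubes. -/
theorem stmt_0 (d : ℕ) (hd : 1 ≤ d)
    (F : List (Fin d → ℝ) → Finset (Fin d → ℝ))
    (hF0 : F [] = ∅)
    (hkeep : ∀ (l : List (Fin d → ℝ)) (p : Fin d → ℝ),
      (∃ c ∈ F l, InCube c p) → F (l ++ [p]) = F l)
    (hadd : ∀ (l : List (Fin d → ℝ)) (p : Fin d → ℝ),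
      ¬ (∃ c ∈ F l, InCube c p) →
        ∃ c : Fin d → ℝ, InCube c p ∧ F (l ++ [p]) = insert c (F l)) :
    ∃ σ : List (Fin d → ℝ), σ.length = 2 ^ d ∧
      (∃ c : Fin d → ℝ, ∀ p ∈ σ, InCube c p) ∧
      2 ^ d ≤ (F σ).card := by
  classical
  suffices h : ∀ n, n ≤ 2 ^ d → ∃ (σ : List (Fin d → ℝ)) (a b : Fin d → ℝ) (ρ : ℝ)
      (Φ : Finset (Fin d → Bool)),
      σ.length = n ∧ (F σ).card = n ∧ 0 < ρ ∧ (∀ j, a j ≤ b j) ∧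
      (∀ j, b j - a j ≤ 1 - ρ) ∧ (∀ q ∈ σ, ∀ j, a j ≤ q j ∧ q j ≤ b j) ∧
      Φ.card ≤ n ∧
      (∀ C ∈ F σ, ∀ w : Fin d → Bool, w ∉ Φ →
        ∃ j, (w j = false ∧ a j < C j) ∨ (w j = true ∧ C j + 1 < b j)) by
    obtain ⟨σ, a, b, ρ, Φ, hlen, hcard, hρ, hab, hsp, hin, -, -⟩ := h (2 ^ d) le_rfl
    refine ⟨σ, hlen, ⟨a, fun q hq j => ⟨(hin q hq j).1, ?_⟩⟩, hcard.ge⟩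
    have := (hin q hq j).2
    have := hsp j
    linarith
  intro n
  induction n with
  | zero =>
    intro _
    refine ⟨[], 0, fun _ => 1/2, 1/2, ∅, rfl, by simp [hF0], by norm_num,
      fun j => by norm_num, fun j => by norm_num, by simp, by simp, ?_⟩
    intro C hC
    simp [hF0] at hC
  | succ n ih =>
    intro hle
    obtain ⟨σ, a, b, ρ, Φ, hlen, hcard, hρ, hab, hsp, hin, hΦ, hcert⟩ :=
      ih (le_of_lt (Nat.lt_of_succ_le hle))
    have hΦlt : Φ.card < 2 ^ d := lt_of_le_of_lt hΦ (Nat.lt_of_succ_le hle)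
    have hwex : ∃ w : Fin d → Bool, w ∉ Φ := by
      by_contra hc
      push_neg at hc
      have huniv : Φ = Finset.univ := Finset.eq_univ_iff_forall.mpr hc
      rw [huniv, Finset.card_univ] at hΦlt
      simp [Fintype.card_fun] at hΦlt
    obtain ⟨w, hw⟩ := hwex
    set p : Fin d → ℝ := fun j => if w j = true then b j else a j with hp
    have hnot : ¬ ∃ C ∈ F σ, InCube C p := by
      rintro ⟨C, hC, hcube⟩
      obtain ⟨j, hj⟩ := hcert C hC w hw
      rcases hj with ⟨hwj, hac⟩ | ⟨hwj, hcb⟩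
      · have h1 := (hcube j).1
        simp only [hp, hwj] at h1
        simp at h1
        linarith
      · have h2 := (hcube j).2
        simp only [hp, hwj] at h2
        simp at h2
        linarith
    obtain ⟨C, hCp, hFeq⟩ := hadd σ p hnot
    have hCnot : C ∉ F σ := fun hmem => hnot ⟨C, hmem, hCp⟩
    set a' : Fin d → ℝ := fun j =>
      if w j = true then
        (if a j < C j then a j else if b j - 1 + ρ/2 ≤ C j then C j - ρ/8 else a j)
      else
        (if C j + 1 < b j then a j else if C j ≤ a j - ρ/2 then a j else C j - ρ/8)
      with ha'
    set b' : Fin d → ℝ := fun j =>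
      if w j = true then
        (if a j < C j then b j else if b j - 1 + ρ/2 ≤ C j then b j else C j + 1 + ρ/8)
      else
        (if C j + 1 < b j then b j else if C j ≤ a j - ρ/2 then C j + 1 + ρ/8 else b j)
      with hb'
    set f : Fin d → Bool := fun j =>
      if w j = true then
        (if a j < C j then true else if b j - 1 + ρ/2 ≤ C j then true else false)
      else
        (if C j + 1 < b j then false else if C j ≤ a j - ρ/2 then false else true)
      with hf
    have key : ∀ j, a' j ≤ a j ∧ b j ≤ b' j ∧ b' j - a' j ≤ 1 - 3*ρ/8 ∧
        (f j = true → a' j < C j) ∧ (f j = false → C j + 1 < b' j) := by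
      intro j
      have h1 : C j ≤ p j := (hCp j).1
      have h2 : p j ≤ C j + 1 := (hCp j).2
      have hsj := hsp j
      have habj := hab j
      by_cases hwj : w j = true
      · have hpj : p j = b j := by simp [hp, hwj]
        rw [hpj] at h1 h2
        by_cases hc1 : a j < C j
        · have e1 : a' j = a j := by simp [ha', hwj, hc1]
          have e2 : b' j = b j := by simp [hb', hwj, hc1]
          have e3 : f j = true := by simp [hf, hwj, hc1]
          rw [e1, e2, e3]
          refine ⟨le_refl _, le_refl _, by linarith, fun _ => hc1, fun hcontra => by simp at hcontra⟩
        · by_cases hc2 : b j - 1 + ρ/2 ≤ C j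
          · have e1 : a' j = C j - ρ/8 := by simp [ha', hwj, hc1, hc2]
            have e2 : b' j = b j := by simp [hb', hwj, hc1, hc2]
            have e3 : f j = true := by simp [hf, hwj, hc1, hc2]
            rw [e1, e2, e3]
            push_neg at hc1
            refine ⟨by linarith, le_refl _, by linarith, fun _ => by linarith,
              fun hcontra => by simp at hcontra⟩
          · have e1 : a' j = a j := by simp [ha', hwj, hc1, hc2]
            have e2 : b' j = C j + 1 + ρ/8 := by simp [hb', hwj, hc1, hc2]
            have e3 : f j = false := by simp [hf, hwj, hc1, hc2]
            rw [e1, e2, e3]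
            push_neg at hc1 hc2
            refine ⟨le_refl _, by linarith, by linarith,
              fun hcontra => by simp at hcontra, fun _ => by linarith⟩
      · have hpj : p j = a j := by simp [hp, hwj]
        rw [hpj] at h1 h2
        by_cases hc1 : C j + 1 < b j
        · have e1 : a' j = a j := by simp [ha', hwj, hc1]
          have e2 : b' j = b j := by simp [hb', hwj, hc1]
          have e3 : f j = false := by simp [hf, hwj, hc1]
          rw [e1, e2, e3]
          refine ⟨le_refl _, le_refl _, by linarith, fun hcontra => by simp at hcontra,
            fun _ => hc1⟩
        · by_cases hc2 : C j ≤ a j - ρ/2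
          · have e1 : a' j = a j := by simp [ha', hwj, hc1, hc2]
            have e2 : b' j = C j + 1 + ρ/8 := by simp [hb', hwj, hc1, hc2]
            have e3 : f j = false := by simp [hf, hwj, hc1, hc2]
            rw [e1, e2, e3]
            push_neg at hc1
            refine ⟨le_refl _, by linarith, by linarith,
              fun hcontra => by simp at hcontra, fun _ => by linarith⟩
          · have e1 : a' j = C j - ρ/8 := by simp [ha', hwj, hc1, hc2]
            have e2 : b' j = b j := by simp [hb', hwj, hc1, hc2]
            have e3 : f j = true := by simp [hf, hwj, hc1, hc2]
            rw [e1, e2, e3]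
            push_neg at hc1 hc2
            refine ⟨by linarith, le_refl _, by linarith, fun _ => by linarith,
              fun hcontra => by simp at hcontra⟩
    refine ⟨σ ++ [p], a', b', 3*ρ/8, insert f Φ, by simp [hlen], ?_, by linarith, ?_, ?_, ?_, ?_, ?_⟩
    · rw [hFeq, Finset.card_insert_of_notMem hCnot, hcard]
    · intro j
      have k := key j
      have := hab j
      linarith [k.1, k.2.1]
    · intro j
      exact (key j).2.2.1
    · intro q hq j
      rcases List.mem_append.mp hq with hmem | hmem
      · exact ⟨le_trans (key j).1 (hin q hmem j).1, le_trans (hin q hmem j).2 (key j).2.1⟩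
      · have hqp : q = p := by simpa using hmem
        subst hqp
        have hpr : a j ≤ p j ∧ p j ≤ b j := by
          by_cases hwj : w j = true <;> simp [hp, hwj, hab j]
        exact ⟨le_trans (key j).1 hpr.1, le_trans hpr.2 (key j).2.1⟩
    · exact le_trans (Finset.card_insert_le _ _) (Nat.succ_le_succ hΦ)
    · intro C' hC' w' hw'
      rw [hFeq] at hC'
      rcases Finset.mem_insert.mp hC' with rfl | hC'
      · have hne : w' ≠ f := fun he => hw' (he ▸ Finset.mem_insert_self f Φ)
        obtain ⟨j, hj⟩ := Function.ne_iff.mp hne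
        refine ⟨j, ?_⟩
        cases hwj' : w' j with
        | false =>
          have hfj : f j = true := by
            rw [hwj'] at hj
            cases hfe : f j
            · rw [hfe] at hj; exact absurd rfl hj
            · rfl
          exact Or.inl ⟨rfl, (key j).2.2.2.1 hfj⟩
        | true =>
          have hfj : f j = false := by
            rw [hwj'] at hj
            cases hfe : f j
            · rfl
            · rw [hfe] at hj; exact absurd rfl hj
          exact Or.inr ⟨rfl, (key j).2.2.2.2 hfj⟩
      · have hw'' : w' ∉ Φ := fun hmem => hw' (Finset.mem_insert_of_mem hmem)
        obtain ⟨j, hj⟩ := hcert C' hC' w' hw''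
        refine ⟨j, ?_⟩
        rcases hj with ⟨hwj, hlt⟩ | ⟨hwj, hlt⟩
        · exact Or.inl ⟨hwj, lt_of_le_of_lt (key j).1 hlt⟩
        · exact Or.inr ⟨hwj, lt_of_lt_of_le hlt (key j).2.1⟩
end

section
/- Let d ≥ 1 and 0 < x < 1. Let Q = q + [0,x]^d be an axis-parallel cube of side x and U = u + [0,1]^d an axis-parallel unit cube in ℝ^d. Then at most one vertex v of Q (i.e., point of the form q + x·χ with χ ∈ {0,1}^d) satisfies both v ∈ U and dist_∞(v, ∂U) > (1−x)/2, where dist_∞(v, ∂U) is the L∞-distance from v to the boundary of U. -/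
lemma update_mem_frontier_cube {d : ℕ} (u : Fin d → ℝ) {U : Set (Fin d → ℝ)}
    (hU : U = {y | ∀ j, u j ≤ y j ∧ y j ≤ u j + 1})
    {v : Fin d → ℝ} (hv : v ∈ U) (j : Fin d) {t : ℝ}
    (ht : t = u j ∨ t = u j + 1) :
    Function.update v j t ∈ frontier U := by
  rw [hU] at hv
  rw [frontier_eq_closure_inter_closure]
  constructor
  · apply subset_closure
    rw [hU]
    intro i
    rcases eq_or_ne i j with rfl | hij
    · simp only [Function.update_self]
      rcases ht with rfl | rfl
      · exact ⟨le_refl _, by linarith⟩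
      · exact ⟨by linarith, le_refl _⟩
    · simpa [Function.update_of_ne hij] using hv i
  · rw [Metric.mem_closure_iff]
    intro ε hε
    rcases ht with rfl | rfl
    · refine ⟨Function.update v j (u j - ε/2), ?_, ?_⟩
      · rw [hU]
        intro h
        have := (h j).1
        simp only [Function.update_self] at this
        linarith
      · have hle : dist (Function.update v j (u j)) (Function.update v j (u j - ε/2)) ≤ ε/2 := by
          rw [dist_pi_le_iff (by linarith)]
          intro i
          rcases eq_or_ne i j with rfl | hij
          · simp only [Function.update_self, Real.dist_eq]
            rw [show u i - (u i - ε/2) = ε/2 by ring, abs_of_nonneg (by linarith)]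
          · simp [Function.update_of_ne hij]
            linarith
        linarith
    · refine ⟨Function.update v j (u j + 1 + ε/2), ?_, ?_⟩
      · rw [hU]
        intro h
        have := (h j).2
        simp only [Function.update_self] at this
        linarith
      · have hle : dist (Function.update v j (u j + 1))
            (Function.update v j (u j + 1 + ε/2)) ≤ ε/2 := by
          rw [dist_pi_le_iff (by linarith)]
          intro i
          rcases eq_or_ne i j with rfl | hij
          · simp only [Function.update_self, Real.dist_eq]
            rw [show u i + 1 - (u i + 1 + ε/2) = -(ε/2) by ring, abs_neg,
              abs_of_nonneg (by linarith)]
          · simp [Function.update_of_ne hij]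
            linarith
        linarith

lemma deep_coord {d : ℕ} (u : Fin d → ℝ) {U : Set (Fin d → ℝ)}
    (hU : U = {y | ∀ j, u j ≤ y j ∧ y j ≤ u j + 1})
    {v : Fin d → ℝ} (hv : v ∈ U) {c : ℝ}
    (hc : c < Metric.infDist v (frontier U)) (j : Fin d) :
    c < v j - u j ∧ c < u j + 1 - v j := by
  have hvj : u j ≤ v j ∧ v j ≤ u j + 1 := by
    rw [hU] at hv; exact hv j
  have key : ∀ t : ℝ, t = u j ∨ t = u j + 1 → c < |v j - t| := by
    intro t ht
    have hfr := update_mem_frontier_cube u hU hv j ht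
    have h1 : Metric.infDist v (frontier U) ≤ dist v (Function.update v j t) :=
      Metric.infDist_le_dist_of_mem hfr
    have h2 : dist v (Function.update v j t) ≤ |v j - t| := by
      rw [dist_pi_le_iff (abs_nonneg _)]
      intro i
      rcases eq_or_ne i j with rfl | hij
      · simp [Real.dist_eq]
      · simp [Function.update_of_ne hij]
    linarith
  constructor
  · have := key (u j) (Or.inl rfl)
    rwa [abs_of_nonneg (by linarith [hvj.1])] at this
  · have := key (u j + 1) (Or.inr rfl)
    rw [abs_of_nonpos (by linarith [hvj.2])] at this
    linarith

/-- Let `Q = q + [0,x]^d` be a cube of side `x ∈ (0,1)` and `U = u + [0,1]^d` a unit cube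
in `ℝ^d` with the L∞ norm.  At most one vertex `v = q + x • χ`, `χ ∈ {0,1}^d`, of `Q`
is deeply covered by `U`, i.e. satisfies `v ∈ U` and `dist_∞(v, ∂U) > (1-x)/2`. -/
theorem stmt_1 (d : ℕ) (hd : 1 ≤ d) (x : ℝ) (hx0 : 0 < x) (hx1 : x < 1)
    (q u : Fin d → ℝ)
    (U : Set (Fin d → ℝ))
    (hU : U = {y | ∀ j, u j ≤ y j ∧ y j ≤ u j + 1})
    (χ₁ χ₂ : Fin d → ℝ)
    (hχ₁ : ∀ j, χ₁ j = 0 ∨ χ₁ j = 1) (hχ₂ : ∀ j, χ₂ j = 0 ∨ χ₂ j = 1)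
    (h₁U : q + x • χ₁ ∈ U)
    (h₁d : (1 - x) / 2 < Metric.infDist (q + x • χ₁) (frontier U))
    (h₂U : q + x • χ₂ ∈ U)
    (h₂d : (1 - x) / 2 < Metric.infDist (q + x • χ₂) (frontier U)) :
    χ₁ = χ₂ := by
  funext j
  have b1 := deep_coord u hU h₁U h₁d j
  have b2 := deep_coord u hU h₂U h₂d j
  simp only [Pi.add_apply, Pi.smul_apply, smul_eq_mul] at b1 b2
  obtain ⟨a1, a1'⟩ := b1
  obtain ⟨a2, a2'⟩ := b2
  rcases hχ₁ j with e1 | e1 <;> rcases hχ₂ j with e2 | e2 <;>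
      rw [e1] at a1 a1' ⊢ <;> rw [e2] at a2 a2' ⊢
  · exfalso; nlinarith
  · exfalso; nlinarith
end

section
/- For every d ≥ 1, every finite set S ⊆ ℝ^d, and every n ≥ 1: if S can be covered by n unit cubes, then the number of grid cells that contain at least one point of S is at most 2^d · n. (This is the 2^d-competitiveness of Algorithm Grid for online Unit Covering under the L∞ norm.) -/
/-- If a finite set `S ⊆ ℝ^d` can be covered by `n` unit cubes, then the number of
grid cells `∏_j [i_j, i_j+1)` (indexed by their integer corner, i.e. by the
coordinatewise floor) containing a point of `S` is at most `2^d · n`: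
Algorithm Grid is `2^d`-competitive for online Unit Covering under the L∞ norm. -/
theorem stmt_2 (d n : ℕ) (hd : 1 ≤ d) (hn : 1 ≤ n)
    (S : Finset (Fin d → ℝ))
    (cubes : Fin n → (Fin d → ℝ))
    (hcov : ∀ p ∈ S, ∃ i, InCube (cubes i) p) :
    (S.image (fun p (j : Fin d) => (⌊p j⌋ : ℤ))).card ≤ 2 ^ d * n := by
  classical
  set T := fun i : Fin n =>
    Fintype.piFinset (fun j => ({⌊cubes i j⌋, ⌊cubes i j⌋ + 1} : Finset ℤ))
  have hsub : (S.image (fun p (j : Fin d) => (⌊p j⌋ : ℤ))) ⊆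
      (Finset.univ : Finset (Fin n)).biUnion T := by
    intro f hf
    simp only [Finset.mem_image] at hf
    obtain ⟨p, hp, rfl⟩ := hf
    obtain ⟨i, hi⟩ := hcov p hp
    refine Finset.mem_biUnion.mpr ⟨i, Finset.mem_univ _, ?_⟩
    rw [Fintype.mem_piFinset]
    intro j
    obtain ⟨h1, h2⟩ := hi j
    have hlo : ⌊cubes i j⌋ ≤ ⌊p j⌋ := Int.floor_le_floor h1
    have hhi : ⌊p j⌋ ≤ ⌊cubes i j⌋ + 1 := by
      have := Int.floor_le_floor h2
      simpa [Int.floor_add_one] using this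
    simp only [T, Finset.mem_insert, Finset.mem_singleton]
    omega
  calc (S.image (fun p (j : Fin d) => (⌊p j⌋ : ℤ))).card
      ≤ ((Finset.univ : Finset (Fin n)).biUnion T).card := Finset.card_le_card hsub
    _ ≤ ∑ i : Fin n, (T i).card := Finset.card_biUnion_le
    _ ≤ ∑ _i : Fin n, 2 ^ d := by
        refine Finset.sum_le_sum fun i _ => ?_
        rw [Fintype.card_piFinset]
        calc ∏ j, ({⌊cubes i j⌋, ⌊cubes i j⌋ + 1} : Finset ℤ).card
            ≤ ∏ _j : Fin d, 2 := Finset.prod_le_prod (fun _ _ => Nat.zero_le _)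
              (fun j _ => Finset.card_insert_le _ _ |>.trans (by simp))
          _ = 2 ^ d := by simp
    _ = 2 ^ d * n := by simp [mul_comm]
end

section
/- For every d ≥ 1 and every finite set S ⊆ ℝ^d, the number of grid cells that contain at least one point of S is at most 2^d times the minimum number of parts in a partition of S into sets of L∞-diameter at most 1. (This is the 2^d-competitiveness of Algorithm Grid for online Unit Clustering under the L∞ norm.) -/
/-- `S` admits a partition into `k` clusters, each of L∞-diameter at most 1. -/
def IsClusterPartition (d : ℕ) (S : Set (Fin d → ℝ)) (k : ℕ) : Prop :=
  ∃ P : Fin k → Set (Fin d → ℝ),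
    (∀ i, P i ⊆ S) ∧ (∀ p ∈ S, ∃ i, p ∈ P i) ∧
    (∀ i j, i ≠ j → Disjoint (P i) (P j)) ∧
    (∀ i, ∀ x ∈ P i, ∀ y ∈ P i, dist x y ≤ 1)

lemma cluster_cells_le (d : ℕ) (T : Finset (Fin d → ℝ))
    (h : ∀ x ∈ T, ∀ y ∈ T, dist x y ≤ 1) :
    (T.image (fun p (j : Fin d) => (⌊p j⌋ : ℤ))).card ≤ 2 ^ d := by
  rcases T.eq_empty_or_nonempty with rfl | hT
  · simp
  set F := T.image (fun p (j : Fin d) => (⌊p j⌋ : ℤ)) with hF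
  have hA : ∀ j : Fin d, (T.image (fun p => (⌊p j⌋ : ℤ))).Nonempty :=
    fun j => hT.image _
  set a : Fin d → ℤ := fun j => (T.image (fun p => (⌊p j⌋ : ℤ))).min' (hA j) with ha
  have hsub : F ⊆ Fintype.piFinset (fun j => ({a j, a j + 1} : Finset ℤ)) := by
    intro v hv
    simp only [hF, Finset.mem_image] at hv
    obtain ⟨p, hp, rfl⟩ := hv
    rw [Fintype.mem_piFinset]
    intro j
    have h1 : a j ≤ ⌊p j⌋ := Finset.min'_le _ _ (Finset.mem_image_of_mem _ hp)
    obtain ⟨q, hq, hq2⟩ := Finset.mem_image.mp ((T.image (fun p => (⌊p j⌋ : ℤ))).min'_mem (hA j))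
    have hdist : |p j - q j| ≤ 1 := by
      calc |p j - q j| = dist (p j) (q j) := (Real.dist_eq _ _).symm
        _ ≤ dist p q := dist_le_pi_dist p q j
        _ ≤ 1 := h p hp q hq
    have h2 : p j ≤ q j + 1 := by
      have := abs_le.mp hdist
      linarith [this.1]
    have h3 : ⌊p j⌋ ≤ ⌊q j⌋ + 1 := by
      calc ⌊p j⌋ ≤ ⌊q j + 1⌋ := Int.floor_le_floor h2
        _ = ⌊q j⌋ + 1 := by rw [Int.floor_add_one]
    have h4 : a j = ⌊q j⌋ := hq2.symm
    simp only [Finset.mem_insert, Finset.mem_singleton]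
    rw [h4] at h1 ⊢
    clear_value a F
    rcases lt_or_ge ⌊p j⌋ (⌊q j⌋ + 1) with hlt | hge
    · exact Or.inl (le_antisymm (Int.lt_add_one_iff.mp hlt) h1)
    · exact Or.inr (le_antisymm h3 hge)
  calc F.card ≤ (Fintype.piFinset (fun j => ({a j, a j + 1} : Finset ℤ))).card :=
        Finset.card_le_card hsub
    _ = ∏ j : Fin d, ({a j, a j + 1} : Finset ℤ).card := Fintype.card_piFinset _
    _ ≤ ∏ _j : Fin d, 2 := Finset.prod_le_prod' (fun j _ => Finset.card_insert_le _ _)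
    _ = 2 ^ d := by simp

/-- For every finite `S ⊆ ℝ^d`, the number of grid cells `∏_j [i_j, i_j+1)`
(indexed by the coordinatewise floor) containing a point of `S` is at most `2^d`
times the minimum number of parts in a partition of `S` into sets of L∞-diameter
at most 1: Algorithm Grid is `2^d`-competitive for online Unit Clustering. -/
theorem stmt_3 (d : ℕ) (hd : 1 ≤ d) (S : Finset (Fin d → ℝ)) :
    (S.image (fun p (j : Fin d) => (⌊p j⌋ : ℤ))).card
      ≤ 2 ^ d * sInf {k | IsClusterPartition d (↑S) k} := by
  classical
  have hne : {k | IsClusterPartition d (↑S) k}.Nonempty := by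
    refine ⟨S.card, fun i => {((S.equivFin.symm i : S) : Fin d → ℝ)}, ?_, ?_, ?_, ?_⟩
    · rintro i x rfl; exact (S.equivFin.symm i).2
    · intro p hp
      exact ⟨S.equivFin ⟨p, hp⟩, by simp⟩
    · intro i j hij
      simp only [Set.disjoint_singleton_left, Set.mem_singleton_iff]
      intro hcontra
      exact hij (S.equivFin.symm.injective (Subtype.coe_injective hcontra))
    · rintro i x rfl y rfl; simp
  set K := sInf {k | IsClusterPartition d (↑S) k} with hK
  obtain ⟨P, hPsub, hPcov, _, hPdiam⟩ := Nat.sInf_mem hne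
  have hsub : S.image (fun p (j : Fin d) => (⌊p j⌋ : ℤ)) ⊆
      (Finset.univ : Finset (Fin K)).biUnion
        (fun i => (S.filter (fun p => p ∈ P i)).image (fun p (j : Fin d) => (⌊p j⌋ : ℤ))) := by
    intro v hv
    obtain ⟨p, hp, rfl⟩ := Finset.mem_image.mp hv
    obtain ⟨i, hi⟩ := hPcov p (by exact_mod_cast hp)
    exact Finset.mem_biUnion.mpr ⟨i, Finset.mem_univ i,
      Finset.mem_image_of_mem _ (Finset.mem_filter.mpr ⟨hp, hi⟩)⟩
  calc (S.image (fun p (j : Fin d) => (⌊p j⌋ : ℤ))).card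
      ≤ _ := Finset.card_le_card hsub
    _ ≤ ∑ i : Fin K, ((S.filter (fun p => p ∈ P i)).image
          (fun p (j : Fin d) => (⌊p j⌋ : ℤ))).card := Finset.card_biUnion_le
    _ ≤ ∑ _i : Fin K, 2 ^ d := Finset.sum_le_sum (fun i _ => cluster_cells_le d _
          (fun x hx y hy => hPdiam i x (Finset.mem_filter.mp hx).2 y (Finset.mem_filter.mp hy).2))
    _ = 2 ^ d * K := by simp [mul_comm]
end

section
/- For every d ≥ 1 and every even integer K ≥ 2, any partition of the grid {1,…,K}^d ⊆ ℝ^d into exactly (K/2)^d parts of L∞-diameter at most 1 is unique: every part equals a Cartesian product ∏_{j=1}^d {a_j, a_j+1} where each a_j is an odd integer with 1 ≤ a_j ≤ K−1. -/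
/-- For every `d ≥ 1` and even `K ≥ 2`, any partition of the grid `{1,…,K}^d ⊆ ℝ^d`
into exactly `(K/2)^d` parts of L∞-diameter at most 1 is the standard one: every part
equals a product `∏_j {a_j, a_j + 1}` with all `a_j` odd integers, `1 ≤ a_j ≤ K - 1`. -/
theorem stmt_8 (d K : ℕ) (hd : 1 ≤ d) (hK : 2 ≤ K) (hKe : Even K)
    (G : Set (Fin d → ℝ))
    (hG : G = {p : Fin d → ℝ | ∃ z : Fin d → ℤ,
      (∀ j, 1 ≤ z j ∧ z j ≤ (K : ℤ)) ∧ ∀ j, p j = (z j : ℝ)})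
    (P : Fin ((K / 2) ^ d) → Set (Fin d → ℝ))
    (hsub : ∀ i, P i ⊆ G)
    (hcov : ∀ p ∈ G, ∃ i, p ∈ P i)
    (hdisj : ∀ i j, i ≠ j → Disjoint (P i) (P j))
    (hdiam : ∀ i, ∀ x ∈ P i, ∀ y ∈ P i, dist x y ≤ 1) :
    ∀ i, ∃ a : Fin d → ℤ,
      (∀ j, Odd (a j) ∧ 1 ≤ a j ∧ a j ≤ (K : ℤ) - 1) ∧
      P i = {p : Fin d → ℝ | ∀ j, p j = (a j : ℝ) ∨ p j = (a j : ℝ) + 1} := by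
  classical
  set c : (Fin d → ℤ) → (Fin d → ℝ) := fun z j => (z j : ℝ) with hc
  set S : Finset (Fin d → ℤ) := Fintype.piFinset (fun _ => Finset.Icc (1:ℤ) (K:ℤ)) with hS
  have hmemS : ∀ z, z ∈ S ↔ ∀ j, 1 ≤ z j ∧ z j ≤ (K:ℤ) := by
    intro z
    simp [hS, Fintype.mem_piFinset, Finset.mem_Icc]
  have hGmem : ∀ z ∈ S, c z ∈ G := by
    intro z hz
    rw [hG]
    exact ⟨z, (hmemS z).1 hz, fun j => rfl⟩
  have hGc : ∀ p ∈ G, ∃ z ∈ S, p = c z := by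
    intro p hp
    rw [hG] at hp
    obtain ⟨z, h1, h2⟩ := hp
    exact ⟨z, (hmemS z).2 h1, funext h2⟩
  set T : Fin ((K/2)^d) → Finset (Fin d → ℤ) := fun i => S.filter (fun z => c z ∈ P i) with hT
  have hmemT : ∀ i z, z ∈ T i ↔ z ∈ S ∧ c z ∈ P i := by
    intro i z; simp [hT]
  -- coordinatewise distance bound
  have hdist1 : ∀ i, ∀ z ∈ T i, ∀ w ∈ T i, ∀ j, z j ≤ w j + 1 := by
    intro i z hz w hw j
    have h1 : dist (c z) (c w) ≤ 1 :=
      hdiam i _ ((hmemT i z).1 hz).2 _ ((hmemT i w).1 hw).2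
    have h2 : dist (c z j) (c w j) ≤ 1 := (dist_pi_le_iff zero_le_one).1 h1 j
    rw [Real.dist_eq, abs_le] at h2
    have h3 : (z j : ℝ) ≤ (w j : ℝ) + 1 := by
      have := h2.2
      simp only [hc] at this
      linarith
    exact_mod_cast h3
  -- each part is contained in a 2^d box
  have hbox : ∀ i, ∃ a : Fin d → ℤ,
      T i ⊆ Fintype.piFinset (fun j => Finset.Icc (a j) (a j + 1)) := by
    intro i
    by_cases hne : (T i).Nonempty
    · have himg : ∀ j, ((T i).image (fun z => z j)).Nonempty := fun j => hne.image _
      refine ⟨fun j => ((T i).image (fun z => z j)).min' (himg j), ?_⟩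
      intro z hz
      rw [Fintype.mem_piFinset]
      intro j
      rw [Finset.mem_Icc]
      constructor
      · exact Finset.min'_le _ _ (Finset.mem_image_of_mem _ hz)
      · obtain ⟨w, hw, hwj⟩ := Finset.mem_image.1 (Finset.min'_mem _ (himg j))
        show z j ≤ ((T i).image (fun z => z j)).min' (himg j) + 1
        rw [← hwj]
        exact hdist1 i z hz w hw j
    · exact ⟨fun _ => 0, by simp [Finset.not_nonempty_iff_eq_empty.mp hne]⟩
  have hboxcard : ∀ a : Fin d → ℤ,
      (Fintype.piFinset (fun j => Finset.Icc (a j) (a j + 1))).card = 2^d := by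
    intro a
    rw [Fintype.card_piFinset]
    have h2 : ∀ x : Fin d, (Finset.Icc (a x) (a x + 1)).card = 2 := by
      intro x
      rw [Int.card_Icc]
      omega
    simp [h2, Finset.prod_const, Finset.card_univ]
  have hble : ∀ i, (T i).card ≤ 2^d := by
    intro i
    obtain ⟨a, ha⟩ := hbox i
    calc (T i).card ≤ _ := Finset.card_le_card ha
    _ = 2^d := hboxcard a
  -- total count
  have hScard : S.card = K^d := by
    rw [hS, Fintype.card_piFinset]
    simp [Int.card_Icc]
  have hSunion : S = Finset.univ.biUnion T := by
    ext z
    simp only [Finset.mem_biUnion, Finset.mem_univ, true_and, hmemT]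
    constructor
    · intro hz
      obtain ⟨i, hi⟩ := hcov (c z) (hGmem z hz)
      exact ⟨i, hz, hi⟩
    · rintro ⟨i, hz, -⟩; exact hz
  have hTdisj : ∀ i ∈ Finset.univ, ∀ i' ∈ Finset.univ, i ≠ i' → Disjoint (T i) (T i') := by
    intro i _ i' _ hii
    rw [Finset.disjoint_left]
    intro z hz hz'
    exact Set.disjoint_left.mp (hdisj i i' hii) ((hmemT i z).1 hz).2 ((hmemT i' z).1 hz').2
  have htot : ∑ i, (T i).card = K^d := by
    rw [← hScard, hSunion, Finset.card_biUnion hTdisj]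
  have hKd : (K/2)^d * 2^d = K^d := by
    obtain ⟨k, hk⟩ := hKe
    subst hk
    have h : (k + k) / 2 = k := by omega
    rw [h, ← Nat.mul_pow]
    ring_nf
  have hcard : ∀ i, (T i).card = 2^d := by
    by_contra h
    push_neg at h
    obtain ⟨i0, hi0⟩ := h
    have hlt : (T i0).card < 2^d := lt_of_le_of_ne (hble i0) hi0
    have hs : ∑ i, (T i).card < ∑ _i : Fin ((K/2)^d), 2^d :=
      Finset.sum_lt_sum (fun i _ => hble i) ⟨i0, Finset.mem_univ _, hlt⟩
    rw [htot] at hs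
    simp only [Finset.sum_const, Finset.card_univ, Fintype.card_fin, smul_eq_mul] at hs
    omega
  -- structure: each part is exactly a box
  have hA : ∀ i, ∃ a : Fin d → ℤ, (∀ j, 1 ≤ a j ∧ a j + 1 ≤ (K:ℤ)) ∧
      T i = Fintype.piFinset (fun j => Finset.Icc (a j) (a j + 1)) := by
    intro i
    obtain ⟨a, ha⟩ := hbox i
    have heq : T i = Fintype.piFinset (fun j => Finset.Icc (a j) (a j + 1)) := by
      apply Finset.eq_of_subset_of_card_le ha
      rw [hboxcard a, hcard i]
    refine ⟨a, ?_, heq⟩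
    intro j
    have h1 : a ∈ T i := by
      rw [heq, Fintype.mem_piFinset]
      intro k; rw [Finset.mem_Icc]; omega
    have h2 : (fun k => a k + 1) ∈ T i := by
      rw [heq, Fintype.mem_piFinset]
      intro k; rw [Finset.mem_Icc]; omega
    have hb1 := (hmemS a).1 ((hmemT i a).1 h1).1 j
    have hb2 := (hmemS _).1 ((hmemT i _).1 h2).1 j
    omega
  choose A hA1 hA2 using hA
  -- membership in a part, integer version
  have hTmem' : ∀ i z, z ∈ T i ↔ ∀ j, A i j ≤ z j ∧ z j ≤ A i j + 1 := by
    intro i z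
    rw [hA2 i, Fintype.mem_piFinset]
    simp [Finset.mem_Icc]
  have hTS : ∀ i, ∀ z ∈ T i, z ∈ S := fun i z hz => ((hmemT i z).1 hz).1
  -- real description of parts
  have hPbox : ∀ i, P i = {p : Fin d → ℝ | ∀ j, p j = (A i j : ℝ) ∨ p j = (A i j : ℝ) + 1} := by
    intro i
    ext p
    constructor
    · intro hp
      obtain ⟨z, hzS, rfl⟩ := hGc p (hsub i hp)
      have hzT : z ∈ T i := (hmemT i z).2 ⟨hzS, hp⟩
      intro j
      have hm := (hTmem' i z).1 hzT j
      have hz : z j = A i j ∨ z j = A i j + 1 := by omega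
      rcases hz with h | h
      · left; simp [hc, h]
      · right
        show ((z j : ℤ) : ℝ) = _
        rw [h]
        push_cast
        ring
    · intro hp
      set z : Fin d → ℤ := fun j => if p j = (A i j : ℝ) then A i j else A i j + 1 with hz
      have hpz : p = c z := by
        funext j
        rcases hp j with h | h
        · simp [hc, hz, h]
        · by_cases h' : p j = (A i j : ℝ)
          · simp [hc, hz, h']
          · simp only [hc, hz, if_neg h']
            rw [h]
            push_cast
            ring
      have hzT : z ∈ T i := by
        rw [hTmem' i z]
        intro j
        simp only [hz]
        split <;> omega
      rw [hpz]
      exact ((hmemT i z).1 hzT).2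
  -- key induction: corners are the odd roundings
  have key : ∀ n : ℕ, ∀ z ∈ S, (∑ j, (z j).toNat) ≤ n → ∀ i, c z ∈ P i →
      ∀ j, A i j = (if Odd (z j) then z j else z j - 1) := by
    intro n
    induction n with
    | zero =>
      intro z hz hsum i hi j
      exfalso
      have h1 := (hmemS z).1 hz j
      have h2 : (z j).toNat ≤ ∑ k, (z k).toNat :=
        Finset.single_le_sum (f := fun k => (z k).toNat)
          (fun k _ => Nat.zero_le _) (Finset.mem_univ j)
      omega
    | succ n IH =>
      intro z hz hsum i hi j
      have hzT : z ∈ T i := (hmemT i z).2 ⟨hz, hi⟩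
      have hzb := (hTmem' i z).1 hzT
      have hbnd1 := (hA1 i j).1
      have hSzj := (hmemS z).1 hz j
      have hAj : A i j = z j ∨ A i j = z j - 1 := by have := hzb j; omega
      by_cases ho : Odd (z j)
      · simp only [if_pos ho]
        rcases hAj with h | h
        · exact h
        · exfalso
          have hzj2 : 2 ≤ z j := by omega
          set w : Fin d → ℤ := Function.update z j (z j - 1) with hw
          have hwS : w ∈ S := by
            rw [hmemS]
            intro k
            by_cases hk : k = j
            · subst hk
              rw [hw, Function.update_self]
              omega
            · rw [hw, Function.update_of_ne hk]
              exact (hmemS z).1 hz k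
          have hwT : w ∈ T i := by
            rw [hTmem' i w]
            intro k
            by_cases hk : k = j
            · subst hk
              rw [hw, Function.update_self]
              omega
            · rw [hw, Function.update_of_ne hk]
              exact hzb k
          have hsum' : ∑ k, (w k).toNat ≤ n := by
            have hlt : ∑ k, (w k).toNat < ∑ k, (z k).toNat := by
              apply Finset.sum_lt_sum
              · intro k _
                by_cases hk : k = j
                · subst hk
                  rw [hw, Function.update_self]
                  omega
                · rw [hw, Function.update_of_ne hk]
              · refine ⟨j, Finset.mem_univ j, ?_⟩
                rw [hw, Function.update_self]
                omega
            omega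
          obtain ⟨i', hi'⟩ := hcov (c w) (hGmem w hwS)
          have hwj : ¬ Odd (w j) := by
            rw [hw, Function.update_self, Int.not_odd_iff_even]
            obtain ⟨m, hm⟩ := ho
            exact ⟨m, by omega⟩
          have hkey := IH w hwS hsum' i' hi' j
          rw [if_neg hwj, hw, Function.update_self] at hkey
          by_cases hii : i = i'
          · subst hii
            omega
          · exact Set.disjoint_left.mp (hdisj i i' hii) ((hmemT i w).1 hwT).2 hi'
      · simp only [if_neg ho]
        rcases hAj with h | h
        swap
        · exact h
        · exfalso
          have hzj2 : 2 ≤ z j := by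
            rcases Int.even_or_odd (z j) with he | hodd
            · obtain ⟨m, hm⟩ := he
              omega
            · exact absurd hodd ho
          set w : Fin d → ℤ := Function.update z j (z j - 1) with hw
          have hwS : w ∈ S := by
            rw [hmemS]
            intro k
            by_cases hk : k = j
            · subst hk
              rw [hw, Function.update_self]
              omega
            · rw [hw, Function.update_of_ne hk]
              exact (hmemS z).1 hz k
          have hsum' : ∑ k, (w k).toNat ≤ n := by
            have hlt : ∑ k, (w k).toNat < ∑ k, (z k).toNat := by
              apply Finset.sum_lt_sum
              · intro k _
                by_cases hk : k = j
                · subst hk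
                  rw [hw, Function.update_self]
                  omega
                · rw [hw, Function.update_of_ne hk]
              · refine ⟨j, Finset.mem_univ j, ?_⟩
                rw [hw, Function.update_self]
                omega
            omega
          obtain ⟨i', hi'⟩ := hcov (c w) (hGmem w hwS)
          have hwj : Odd (w j) := by
            rw [hw, Function.update_self]
            rw [Int.not_odd_iff_even] at ho
            obtain ⟨m, hm⟩ := ho
            exact ⟨m - 1, by omega⟩
          have hkey := IH w hwS hsum' i' hi' j
          rw [if_pos hwj, hw, Function.update_self] at hkey
          -- show z itself is in part i'
          have hwT' : w ∈ T i' := (hmemT i' w).2 ⟨hwS, hi'⟩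
          have hwb' := (hTmem' i' w).1 hwT'
          have hzT' : z ∈ T i' := by
            rw [hTmem' i' z]
            intro k
            by_cases hk : k = j
            · subst hk
              omega
            · have := hwb' k
              rw [hw, Function.update_of_ne hk] at this
              exact this
          by_cases hii : i = i'
          · subst hii
            omega
          · exact Set.disjoint_left.mp (hdisj i i' hii) hi ((hmemT i' z).1 hzT').2
  -- assemble
  intro i
  have hne : (T i).Nonempty := by
    rw [← Finset.card_pos, hcard i]
    positivity
  obtain ⟨z, hzT⟩ := hne
  have hzS := hTS i z hzT
  have hzP : c z ∈ P i := ((hmemT i z).1 hzT).2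
  have hk := key (∑ k, (z k).toNat) z hzS le_rfl i hzP
  refine ⟨A i, ?_, hPbox i⟩
  intro j
  have hkj := hk j
  have hb := hA1 i j
  refine ⟨?_, hb.1, by omega⟩
  by_cases ho : Odd (z j)
  · rw [if_pos ho] at hkj
    rw [hkj]; exact ho
  · rw [if_neg ho] at hkj
    rw [Int.not_odd_iff_even] at ho
    obtain ⟨m, hm⟩ := ho
    rw [hkj]
    exact ⟨m - 1, by omega⟩
end

section
/- Let d ≥ 1, let K ≥ 2 be an even integer, fix ε ∈ (0,1/2) and a signature σ ∈ {−1,0,1}^d, and let S_σ = {p' : p ∈ {1,…,K}^d} be the perturbed grid. Let 𝒬 = {∏_{j=1}^d [a_j, a_j+1] : a_j an odd integer for all j}. Then for every τ ∈ {0,1}^d, S_σ ⊆ ⋃_{Q∈𝒬}(Q + τ) if and only if for every coordinate j: σ_j = 0, or (σ_j = −1 and τ_j = 0), or (σ_j = 1 and τ_j = 1). -/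
/-- The perturbation of the integer point `p` with signature `σ ∈ {-1,0,1}^d` and
magnitude `ε`: coordinate `j` stays `p j` if `σ j = 0`; if `σ j = -1` it moves by `+ε`
at odd coordinates and `-ε` at even ones; if `σ j = 1` the opposite. -/
def perturb (d : ℕ) (σ : Fin d → ℤ) (ε : ℝ) (p : Fin d → ℤ) : Fin d → ℝ :=
  fun j => (p j : ℝ) + (if Odd (p j) then -(σ j : ℝ) * ε else (σ j : ℝ) * ε)

/-- Observation 1: the perturbed grid `S_σ = {p' : p ∈ {1,…,K}^d}` is covered by the
family of translated cubes `Q + τ`, `Q ∈ 𝒬 = {∏_j [a_j, a_j+1] : all a_j odd}`,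
`τ ∈ {0,1}^d`, if and only if for each coordinate `j`: `σ j = 0`, or `σ j = -1` and
`τ j = 0`, or `σ j = 1` and `τ j = 1`. -/
theorem stmt_9 (d K : ℕ) (hd : 1 ≤ d) (hK : 2 ≤ K) (hKe : Even K)
    (ε : ℝ) (hε0 : 0 < ε) (hε : ε < 1 / 2)
    (σ : Fin d → ℤ) (hσ : ∀ j, σ j = -1 ∨ σ j = 0 ∨ σ j = 1)
    (τ : Fin d → ℤ) (hτ : ∀ j, τ j = 0 ∨ τ j = 1) :
    (∀ p : Fin d → ℤ, (∀ j, 1 ≤ p j ∧ p j ≤ (K : ℤ)) →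
      ∃ a : Fin d → ℤ, (∀ j, Odd (a j)) ∧
        ∀ j, (a j : ℝ) + (τ j : ℝ) ≤ perturb d σ ε p j ∧
             perturb d σ ε p j ≤ (a j : ℝ) + (τ j : ℝ) + 1)
    ↔ (∀ j, σ j = 0 ∨ (σ j = -1 ∧ τ j = 0) ∨ (σ j = 1 ∧ τ j = 1)) := by
  have hK1 : (1 : ℤ) ≤ (K : ℤ) := by exact_mod_cast Nat.one_le_of_lt hK
  constructor
  · intro h j
    obtain ⟨a, ha, hcov⟩ := h (fun _ => 1) (fun _ => ⟨le_refl 1, hK1⟩)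
    obtain ⟨h1, h2⟩ := hcov j
    obtain ⟨k, hk⟩ := ha j
    have hxk : (a j : ℝ) = 2 * (k : ℝ) + 1 := by rw [hk]; push_cast; ring
    rcases hσ j with hs | hs | hs
    · rcases hτ j with ht | ht
      · exact Or.inr (Or.inl ⟨hs, ht⟩)
      · exfalso
        have hx : perturb d σ ε (fun _ => 1) j = 1 + ε := by
          simp [perturb, hs]
        rw [hx, ht] at h1 h2
        push_cast at h1 h2
        -- h1 : a j + 1 ≤ 1 + ε, h2 : 1 + ε ≤ a j + 1 + 1
        rw [hxk] at h1 h2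
        have hki : k ≤ -1 := by
          have h' : (k : ℝ) < 0 := by linarith
          have : k < 0 := by exact_mod_cast h'
          omega
        have hk0 : (k : ℝ) ≤ -1 := by
          calc (k : ℝ) ≤ ((-1 : ℤ) : ℝ) := by exact_mod_cast hki
          _ = -1 := by norm_num
        linarith
    · exact Or.inl hs
    · rcases hτ j with ht | ht
      · exfalso
        have hx : perturb d σ ε (fun _ => 1) j = 1 - ε := by
          simp [perturb, hs]; ring
        rw [hx, ht] at h1 h2
        push_cast at h1 h2
        rw [hxk] at h1 h2
        have hki : k ≤ -1 := by
          have h' : (k : ℝ) < 0 := by linarith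
          have : k < 0 := by exact_mod_cast h'
          omega
        have hk0 : (k : ℝ) ≤ -1 := by
          calc (k : ℝ) ≤ ((-1 : ℤ) : ℝ) := by exact_mod_cast hki
          _ = -1 := by norm_num
        linarith
      · exact Or.inr (Or.inr ⟨hs, ht⟩)
  · intro hcond p hp
    refine ⟨fun j => if Odd (p j) then (if τ j = 0 then p j else p j - 2) else p j - 1,
      ?_, ?_⟩
    · intro j
      beta_reduce
      rcases Int.even_or_odd (p j) with he | ho
      · obtain ⟨k, hk⟩ := id he
        rw [if_neg (Int.not_odd_iff_even.2 he)]
        exact ⟨k - 1, by omega⟩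
      · obtain ⟨k, hk⟩ := id ho
        rw [if_pos ho]
        rcases hτ j with ht | ht
        · rw [if_pos ht]; exact ⟨k, hk⟩
        · rw [if_neg (by omega : ¬ τ j = 0)]; exact ⟨k - 1, by omega⟩
    · intro j
      beta_reduce
      unfold perturb
      rcases Int.even_or_odd (p j) with he | ho
      · have hno : ¬ Odd (p j) := Int.not_odd_iff_even.2 he
        rw [if_neg hno, if_neg hno]
        rcases hcond j with hs | ⟨hs, ht⟩ | ⟨hs, ht⟩
        · rcases hτ j with ht | ht <;>
          · rw [hs, ht]; push_cast; constructor <;> linarith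
        · rw [hs, ht]; push_cast; constructor <;> linarith
        · rw [hs, ht]; push_cast; constructor <;> linarith
      · rw [if_pos ho, if_pos ho]
        rcases hcond j with hs | ⟨hs, ht⟩ | ⟨hs, ht⟩
        · rcases hτ j with ht | ht
          · rw [hs, ht, if_pos rfl]; push_cast; constructor <;> linarith
          · rw [hs, ht, if_neg (by omega : ¬ (1:ℤ) = 0)]
            push_cast; constructor <;> linarith
        · rw [hs, ht, if_pos rfl]; push_cast; constructor <;> linarith
        · rw [hs, ht, if_neg (by omega : ¬ (1:ℤ) = 0)]
          push_cast; constructor <;> linarith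
end

section
/- Let d ≥ 1, fix ε ∈ (0,1/2) and a signature σ ∈ {−1,0,1}^d. Then every subset of ℝ^d of L∞-diameter at most 1 contains at most 2^d points of the perturbed lattice {p' : p ∈ ℤ^d}. -/
/-- Every subset of `ℝ^d` of L∞-diameter at most 1 contains at most `2^d` points of
the perturbed lattice `{p' : p ∈ ℤ^d}`. -/
theorem stmt_10 (d : ℕ) (hd : 1 ≤ d)
    (ε : ℝ) (hε0 : 0 < ε) (hε : ε < 1 / 2)
    (σ : Fin d → ℤ) (hσ : ∀ j, σ j = -1 ∨ σ j = 0 ∨ σ j = 1)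
    (S : Set (Fin d → ℝ)) (hS : ∀ x ∈ S, ∀ y ∈ S, dist x y ≤ 1) :
    {p : Fin d → ℤ | perturb d σ ε p ∈ S}.Finite ∧
    {p : Fin d → ℤ | perturb d σ ε p ∈ S}.ncard ≤ 2 ^ d := by
  set T := {p : Fin d → ℤ | perturb d σ ε p ∈ S} with hT
  -- bound on the perturbation magnitude
  have hpert : ∀ (j : Fin d) (r : ℤ),
      |(if Odd r then -(σ j : ℝ) * ε else (σ j : ℝ) * ε)| ≤ ε := by
    intro j r
    rcases hσ j with h | h | h <;> split <;>
      simp [h, abs_of_pos hε0, hε0.le]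
  -- any two points of T differ by at most 1 in each coordinate
  have key : ∀ p ∈ T, ∀ q ∈ T, ∀ j, |p j - q j| ≤ 1 := by
    intro p hp q hq j
    have hd1 : dist (perturb d σ ε p) (perturb d σ ε q) ≤ 1 := hS _ hp _ hq
    have hj : dist (perturb d σ ε p j) (perturb d σ ε q j) ≤ 1 :=
      le_trans (dist_le_pi_dist _ _ j) hd1
    rw [Real.dist_eq] at hj
    set ep := (if Odd (p j) then -(σ j : ℝ) * ε else (σ j : ℝ) * ε) with hep
    set eq := (if Odd (q j) then -(σ j : ℝ) * ε else (σ j : ℝ) * ε) with heq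
    have h1 : |ep| ≤ ε := hpert j (p j)
    have h2 : |eq| ≤ ε := hpert j (q j)
    have hEq : perturb d σ ε p j - perturb d σ ε q j
        = ((p j : ℝ) - (q j : ℝ)) + (ep - eq) := by
      simp [perturb, hep, heq]; ring
    have : |(p j : ℝ) - (q j : ℝ)| ≤ 1 + (ε + ε) := by
      have := abs_sub_abs_le_abs_sub ((p j : ℝ) - (q j : ℝ) + (ep - eq)) (ep - eq)
      have habs : |ep - eq| ≤ ε + ε := (abs_sub _ _).trans (by gcongr)
      calc |(p j : ℝ) - (q j : ℝ)|
          = |((p j : ℝ) - (q j : ℝ) + (ep - eq)) - (ep - eq)| := by ring_nf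
        _ ≤ |(p j : ℝ) - (q j : ℝ) + (ep - eq)| + |ep - eq| := abs_sub _ _
        _ ≤ 1 + (ε + ε) := by
            rw [← hEq]; gcongr
    have hlt : |(p j : ℝ) - (q j : ℝ)| < 2 := lt_of_le_of_lt this (by linarith)
    have : ((|p j - q j| : ℤ) : ℝ) < 2 := by push_cast; exact hlt
    have := (by exact_mod_cast this : |p j - q j| < (2 : ℤ))
    omega
  rcases Set.eq_empty_or_nonempty T with h | ⟨p₀, hp₀⟩
  · simp [h]
  · set f : (Fin d → ℤ) → (Fin d → Bool) := fun p j => decide (p j = p₀ j) with hf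
    have hinj : Set.InjOn f T := by
      intro p hp q hq hfeq
      funext j
      have h1 := key p hp q hq j
      have h2 := key p hp p₀ hp₀ j
      have h3 := key q hq p₀ hp₀ j
      rw [abs_le] at h1 h2 h3
      have : (p j = p₀ j) ↔ (q j = p₀ j) := by
        constructor <;> intro h
        · have := congrFun hfeq j
          simpa [hf, h] using this.symm
        · have := congrFun hfeq j
          simpa [hf, h] using this
      omega
    have hfin : T.Finite :=
      Set.Finite.of_finite_image (Set.toFinite _) hinj
    refine ⟨hfin, ?_⟩
    calc T.ncard = (f '' T).ncard := (Set.ncard_image_of_injOn hinj).symm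
      _ ≤ (Set.univ : Set (Fin d → Bool)).ncard :=
          Set.ncard_le_ncard (Set.subset_univ _) (Set.toFinite _)
      _ = 2 ^ d := by
          simp [Set.ncard_univ, Nat.card_eq_fintype_card]
end

section
/- For every d ≥ 1 and every finite sequence of pairwise distinct points of ℤ^d, every greedy-consistent online clustering of the sequence uses at most k·(2^{d−1} + 1/2) labels (equivalently, twice the number of labels used is at most (2^d + 1)·k), where k is the minimum number of parts in a partition of the point set into sets of L∞-diameter at most 1. In particular, the competitive ratio of the greedy algorithm for Unit Clustering in ℤ^d under the L∞ norm is at most 2^{d−1} + 1/2. -/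
/-- A deterministic online clustering algorithm on `ℝ^d` (L∞ norm): it assigns to every
finite sequence of points a list of labels (one per point, in order), consistently
(labels of earlier points never change) and validly (every label class has
L∞-diameter at most 1). -/
structure OnlineClustering (d : ℕ) where
  label : List (Fin d → ℝ) → List ℕ
  length_eq : ∀ l : List (Fin d → ℝ), (label l).length = l.length
  consistent : ∀ (l : List (Fin d → ℝ)) (p : Fin d → ℝ), label l <+: label (l ++ [p])
  valid : ∀ (l : List (Fin d → ℝ)) (m : ℕ) (p q : Fin d → ℝ),
    (p, m) ∈ l.zip (label l) → (q, m) ∈ l.zip (label l) → dist p q ≤ 1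

/-- The cost of the algorithm on a sequence: the number of distinct labels used. -/
def OnlineClustering.cost {d : ℕ} (A : OnlineClustering d)
    (σ : List (Fin d → ℝ)) : ℕ :=
  (A.label σ).toFinset.card

/-- The offline optimum: the minimum number of clusters of L∞-diameter at most 1
into which the index set of `σ` can be partitioned. -/
noncomputable def listOPT {d : ℕ} (σ : List (Fin d → ℝ)) : ℕ :=
  sInf {k | ∃ f : Fin σ.length → Fin k,
    ∀ i j, f i = f j → dist (σ.get i) (σ.get j) ≤ 1}

/-- The run of the algorithm on `σ` is greedy-consistent: whenever the newly arrived
point `p` receives a label not used before, then for every label `m` already in use,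
the corresponding cluster together with `p` has L∞-diameter greater than 1. -/
def GreedyOn {d : ℕ} (A : OnlineClustering d) (σ : List (Fin d → ℝ)) : Prop :=
  ∀ (l : List (Fin d → ℝ)) (p : Fin d → ℝ), l ++ [p] <+: σ →
    (A.label (l ++ [p])).getD l.length 0 ∉ A.label l →
    ∀ m ∈ A.label l,
      ∃ x ∈ insert p {q | (q, m) ∈ l.zip (A.label l)},
      ∃ y ∈ insert p {q | (q, m) ∈ l.zip (A.label l)}, 1 < dist x y

lemma coordCard (T : Finset ℝ) (hT : ∀ x ∈ T, ∃ z : ℤ, x = (z:ℝ))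
    (hd : ∀ x ∈ T, ∀ y ∈ T, |x - y| ≤ 1) : T.card ≤ 2 := by
  rcases T.eq_empty_or_nonempty with h | h
  · simp [h]
  · set m := T.min' h with hm
    have hsub : T ⊆ ({m, m + 1} : Finset ℝ) := by
      intro x hx
      obtain ⟨zx, hzx⟩ := hT x hx
      obtain ⟨zm, hzm⟩ := hT m (T.min'_mem h)
      have h1 : m ≤ x := T.min'_le x hx
      have h2 : x - m ≤ 1 := by
        have := abs_le.mp (hd x hx m (T.min'_mem h))
        linarith [this.2]
      have hz1 : (0:ℤ) ≤ zx - zm := by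
        have : (0:ℝ) ≤ ((zx - zm : ℤ) : ℝ) := by push_cast; linarith [hzx ▸ hzm ▸ h1]
        exact_mod_cast this
      have hz2 : zx - zm ≤ 1 := by
        have : ((zx - zm : ℤ) : ℝ) ≤ 1 := by push_cast; linarith [hzx ▸ hzm ▸ h2]
        exact_mod_cast this
      interval_cases h : (zx - zm)
      · have : x = m := by
          have : zx = zm := by omega
          rw [hzx, hzm, this]
        simp [this]
      · have : x = m + 1 := by
          have : zx = zm + 1 := by omega
          rw [hzx, hzm, this]; push_cast; ring
        simp [this]
    calc T.card ≤ _ := Finset.card_le_card hsub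
      _ ≤ 2 := Finset.card_insert_le _ _ |>.trans (by simp)

lemma cubeCard {d : ℕ} (S : Finset (Fin d → ℝ))
    (hS : ∀ p ∈ S, ∀ j, ∃ z : ℤ, p j = (z:ℝ))
    (hd : ∀ p ∈ S, ∀ q ∈ S, dist p q ≤ 1) : S.card ≤ 2 ^ d := by
  have hsub : S ⊆ Fintype.piFinset (fun j => S.image (fun p => p j)) := by
    intro p hp
    rw [Fintype.mem_piFinset]
    intro j
    exact Finset.mem_image_of_mem _ hp
  calc S.card ≤ _ := Finset.card_le_card hsub
    _ = ∏ j, (S.image (fun p => p j)).card := Fintype.card_piFinset _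
    _ ≤ ∏ _j : Fin d, 2 := by
        apply Finset.prod_le_prod'
        intro j _
        apply coordCard
        · intro x hx
          obtain ⟨p, hp, rfl⟩ := Finset.mem_image.mp hx
          exact hS p hp j
        · intro x hx y hy
          obtain ⟨p, hp, rfl⟩ := Finset.mem_image.mp hx
          obtain ⟨q, hq, rfl⟩ := Finset.mem_image.mp hy
          have := (dist_pi_le_iff zero_le_one).mp (hd p hp q hq) j
          rwa [Real.dist_eq] at this
    _ = 2 ^ d := by simp

/-- For every `d ≥ 1` and every sequence of pairwise distinct integer points of `ℤ^d`,
every greedy-consistent online clustering uses at most `(2^{d-1} + 1/2)·OPT` labels;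
equivalently, twice the number of labels used is at most `(2^d + 1)·OPT`.  The
competitive ratio of the greedy algorithm for Unit Clustering in `ℤ^d` under L∞ is
thus at most `2^{d-1} + 1/2`. -/
theorem stmt_15 (d : ℕ) (hd : 1 ≤ d) (σ : List (Fin d → ℝ))
    (hint : ∀ p ∈ σ, ∀ j, ∃ z : ℤ, p j = (z : ℝ))
    (hnd : σ.Nodup)
    (A : OnlineClustering d) (hA : GreedyOn A σ) :
    2 * A.cost σ ≤ (2 ^ d + 1) * listOPT σ := by
  classical
  -- trivial case
  rcases eq_or_ne σ [] with rfl | hσne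
  · have : A.label [] = [] := List.eq_nil_of_length_eq_zero (by simp [A.length_eq])
    simp [OnlineClustering.cost, this]
  have hn : 0 < σ.length := List.length_pos_iff.mpr hσne
  -- prefix behaviour of labels
  have prefix_label : ∀ (l t : List (Fin d → ℝ)), A.label l <+: A.label (l ++ t) := by
    intro l t
    induction t using List.reverseRecOn with
    | nil => simp
    | append_singleton t p ih =>
        rw [← List.append_assoc]
        exact ih.trans (A.consistent _ p)
  set n := σ.length with hn_def
  set Lf := A.label σ with hLf
  have hlen : Lf.length = n := A.length_eq σ
  set lab : Fin n → ℕ := fun i => Lf[(i:ℕ)]'(by rw [hlen]; exact i.isLt) with hlab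
  -- the optimum witness
  set k := listOPT σ with hk_def
  have hkmem : k ∈ {k | ∃ f : Fin σ.length → Fin k,
      ∀ i j, f i = f j → dist (σ.get i) (σ.get j) ≤ 1} := by
    apply Nat.sInf_mem
    refine ⟨σ.length, fun i => i, fun i j hij => ?_⟩
    have : i = j := hij
    subst this
    simp
  obtain ⟨f, hf⟩ := hkmem
  -- cost as image
  have hcost : A.cost σ = (Finset.image lab Finset.univ).card := by
    unfold OnlineClustering.cost
    congr 1
    ext m
    simp only [List.mem_toFinset, Finset.mem_image, Finset.mem_univ, true_and]
    rw [← hLf, List.mem_iff_getElem]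
    constructor
    · rintro ⟨i, hi, rfl⟩; exact ⟨⟨i, hlen ▸ hi⟩, rfl⟩
    · rintro ⟨i, rfl⟩; exact ⟨i, by rw [hlen]; exact i.isLt, rfl⟩
  -- labels of prefixes
  have key : ∀ s : ℕ, s ≤ n → A.label (σ.take s) = Lf.take s := by
    intro s hs
    have h1 : A.label (σ.take s) <+: Lf := by
      have := prefix_label (σ.take s) (σ.drop s)
      rwa [List.take_append_drop] at this
    have h2 := List.prefix_iff_eq_take.mp h1
    rw [h2, A.length_eq, List.length_take]
    congr 1
    exact min_eq_left hs
  -- validity on the whole sequence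
  have hval : ∀ i j : Fin n, lab i = lab j → dist (σ.get i) (σ.get j) ≤ 1 := by
    intro i j hij
    have hmem : ∀ i : Fin n, (σ.get i, lab i) ∈ σ.zip Lf := by
      intro i
      rw [List.mem_iff_getElem]
      refine ⟨i, by simp [List.length_zip, hlen]; exact i.isLt, ?_⟩
      rw [List.getElem_zip]
      simp [hlab]
    exact A.valid σ (lab i) _ _ (hmem i) (hij ▸ hmem j)
  -- n ≤ 2^d * k
  have hn_le : n ≤ 2 ^ d * k := by
    have hget_inj : Function.Injective σ.get := List.nodup_iff_injective_get.mp hnd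
    have hsum : (Finset.univ : Finset (Fin n)).card
        = ∑ c : Fin k, (Finset.univ.filter (fun i => f i = c)).card :=
      Finset.card_eq_sum_card_fiberwise (fun i _ => Finset.mem_univ _)
    have hfiber : ∀ c : Fin k, (Finset.univ.filter (fun i => f i = c)).card ≤ 2 ^ d := by
      intro c
      have heq : ((Finset.univ.filter (fun i => f i = c)).image σ.get).card
          = (Finset.univ.filter (fun i => f i = c)).card :=
        Finset.card_image_of_injective _ hget_inj
      rw [← heq]
      apply cubeCard
      · intro p hp
        obtain ⟨i, _, rfl⟩ := Finset.mem_image.mp hp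
        exact hint _ (σ.get_mem _)
      · intro p hp q hq
        obtain ⟨i, hi, rfl⟩ := Finset.mem_image.mp hp
        obtain ⟨j, hj, rfl⟩ := Finset.mem_image.mp hq
        simp only [Finset.mem_filter] at hi hj
        exact hf i j (hi.2.trans hj.2.symm)
    calc n = (Finset.univ : Finset (Fin n)).card := by simp
      _ = _ := hsum
      _ ≤ ∑ _c : Fin k, 2 ^ d := Finset.sum_le_sum (fun c _ => hfiber c)
      _ = 2 ^ d * k := by simp [mul_comm]
  -- the greedy singleton argument
  have hsing : ∀ a b : Fin n, a < b →
      (∀ j, lab j = lab a → j = a) → (∀ j, lab j = lab b → j = b) →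
      dist (σ.get a) (σ.get b) ≤ 1 → False := by
    intro a b hab ha hb hdist
    set t := (b : ℕ) with ht
    set l := σ.take t with hl
    set p := σ.get b with hp
    have htn : t < n := b.isLt
    have hl_len : l.length = t := by
      rw [hl, List.length_take]; omega
    have happ : l ++ [p] = σ.take (t + 1) := by
      rw [hl, hp, ← List.take_concat_get (by omega : t < σ.length), List.concat_eq_append]
      simp
      rw [List.take_add_one, List.getElem?_eq_getElem (by omega)]; rfl
    have hpre1 : l ++ [p] <+: σ := by
      rw [happ]; exact List.take_prefix _ _
    have hLl : A.label l = Lf.take t := key t (le_of_lt htn)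
    have hLlp : A.label (l ++ [p]) = Lf.take (t + 1) := by
      rw [happ]; exact key (t + 1) htn
    have hnotin : lab b ∉ A.label l := by
      rw [hLl]
      intro hmem
      obtain ⟨j, hj, hjv⟩ := List.mem_iff_getElem.mp hmem
      rw [List.getElem_take] at hjv
      have hjt : j < t := by
        rw [List.length_take] at hj; omega
      have hjn : j < n := by omega
      have : (⟨j, hjn⟩ : Fin n) = b := hb ⟨j, hjn⟩ hjv
      have : j = t := by rw [ht]; exact congrArg Fin.val this
      omega
    have hnew : (A.label (l ++ [p])).getD l.length 0 ∉ A.label l := by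
      rw [hl_len, hLlp]
      have hlt : t < (Lf.take (t + 1)).length := by
        rw [List.length_take, hlen]; omega
      rw [List.getD_eq_getElem _ _ hlt, List.getElem_take]
      exact hnotin
    have hmem_m : lab a ∈ A.label l := by
      rw [hLl, List.mem_iff_getElem]
      refine ⟨a, ?_, ?_⟩
      · rw [List.length_take, hlen]
        have : (a:ℕ) < t := hab
        omega
      · rw [List.getElem_take]
    obtain ⟨x, hx, y, hy, hxy⟩ := hA l p hpre1 hnew (lab a) hmem_m
    have hset : {q | (q, lab a) ∈ l.zip (A.label l)} = {σ.get a} := by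
      ext q
      simp only [Set.mem_setOf_eq, Set.mem_singleton_iff]
      constructor
      · intro hq
        obtain ⟨j, hj, hjv⟩ := List.mem_iff_getElem.mp hq
        rw [List.getElem_zip] at hjv
        have hjt : j < t := by
          rw [List.length_zip, hl_len] at hj; omega
        have hjn : j < n := by omega
        have h1 : l[j]'(by rw [hl_len]; omega) = q := congrArg Prod.fst hjv
        have h2 : (A.label l)[j]'(by rw [hLl, List.length_take, hlen]; omega) = lab a :=
          congrArg Prod.snd hjv
        have h2' : lab ⟨j, hjn⟩ = lab a := by
          simp only [hLl, List.getElem_take] at h2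
          simp only [hlab]
          exact h2
        have hja : (⟨j, hjn⟩ : Fin n) = a := ha _ h2'
        have hje : j = (a:ℕ) := congrArg Fin.val hja
        subst hje
        rw [← h1]
        simp only [hl, List.getElem_take]
        simp [List.get_eq_getElem]
      · rintro rfl
        rw [List.mem_iff_getElem]
        refine ⟨a, ?_, ?_⟩
        · rw [List.length_zip, hl_len, hLl, List.length_take, hlen]
          have : (a:ℕ) < t := hab
          omega
        · rw [List.getElem_zip]
          have h1 : l[(a:ℕ)]'(by rw [hl_len]; exact hab) = σ.get a := by
            simp only [hl, List.getElem_take]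
            simp [List.get_eq_getElem]
          have h2 : (A.label l)[(a:ℕ)]'(by rw [hLl, List.length_take, hlen]; have : (a:ℕ) < t := hab; omega) = lab a := by
            simp only [hLl, List.getElem_take, hlab]
          rw [h1, h2]
    rw [hset] at hx hy
    simp only [Set.mem_insert_iff, Set.mem_singleton_iff] at hx hy
    have hd1 : dist p (σ.get a) ≤ 1 := by rw [hp, dist_comm]; exact hdist
    rcases hx with rfl | rfl <;> rcases hy with rfl | rfl
    · simp at hxy; linarith
    · linarith
    · rw [dist_comm] at hxy; linarith
    · simp at hxy; linarith
  -- singleton labels injection into Fin k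
  set L := Finset.image lab Finset.univ with hL
  set fib : ℕ → Finset (Fin n) := fun m => Finset.univ.filter (fun i => lab i = m) with hfib
  set S1 := L.filter (fun m => (fib m).card = 1) with hS1
  have hs1k : S1.card ≤ k := by
    have hkpos : Fin k := f ⟨0, hn⟩
    set φ : ℕ → Fin k := fun m =>
      if h : (fib m).Nonempty then f ((fib m).min' h) else f ⟨0, hn⟩ with hφ
    have := Finset.card_le_card_of_injOn (s := S1) (t := (Finset.univ : Finset (Fin k)))
      φ (fun m _ => Finset.mem_univ (φ m)) ?_
    · simpa using this
    · intro m1 hm1 m2 hm2 heq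
      simp only [Finset.mem_coe, hS1, Finset.mem_filter] at hm1 hm2
      obtain ⟨a1, ha1⟩ := Finset.card_eq_one.mp hm1.2
      obtain ⟨a2, ha2⟩ := Finset.card_eq_one.mp hm2.2
      have hmem1 : ∀ j, lab j = m1 ↔ j = a1 := by
        intro j
        constructor
        · intro hj
          have : j ∈ fib m1 := by simp [hfib, hj]
          rw [ha1, Finset.mem_singleton] at this; exact this
        · intro hj
          rw [hj]
          have : a1 ∈ fib m1 := ha1 ▸ Finset.mem_singleton_self a1
          simp only [hfib, Finset.mem_filter] at this
          exact this.2
      have hmem2 : ∀ j, lab j = m2 ↔ j = a2 := by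
        intro j
        constructor
        · intro hj
          have : j ∈ fib m2 := by simp [hfib, hj]
          rw [ha2, Finset.mem_singleton] at this; exact this
        · intro hj
          rw [hj]
          have : a2 ∈ fib m2 := ha2 ▸ Finset.mem_singleton_self a2
          simp only [hfib, Finset.mem_filter] at this
          exact this.2
      have hφ1 : φ m1 = f a1 := by
        rw [hφ]
        simp only [ha1]
        rw [dif_pos (Finset.singleton_nonempty a1), Finset.min'_singleton]
      have hφ2 : φ m2 = f a2 := by
        rw [hφ]
        simp only [ha2]
        rw [dif_pos (Finset.singleton_nonempty a2), Finset.min'_singleton]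
      have hfa : f a1 = f a2 := by rw [← hφ1, ← hφ2, heq]
      have hdist := hf a1 a2 hfa
      by_contra hne
      have hlab1 : lab a1 = m1 := (hmem1 a1).mpr rfl
      have hlab2 : lab a2 = m2 := (hmem2 a2).mpr rfl
      have hane : a1 ≠ a2 := by
        intro h; apply hne; rw [← hlab1, ← hlab2, h]
      rcases lt_or_gt_of_ne hane with h | h
      · exact hsing a1 a2 h (fun j hj => (hmem1 j).mp (hlab1 ▸ hj))
          (fun j hj => (hmem2 j).mp (hlab2 ▸ hj)) hdist
      · exact hsing a2 a1 h (fun j hj => (hmem2 j).mp (hlab2 ▸ hj))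
          (fun j hj => (hmem1 j).mp (hlab1 ▸ hj)) (dist_comm (σ.get a1) (σ.get a2) ▸ hdist)
  -- counting
  have hsum : n = ∑ m ∈ L, (fib m).card := by
    have := Finset.card_eq_sum_card_fiberwise
      (f := lab) (s := Finset.univ) (t := L)
      (fun i _ => Finset.mem_image_of_mem lab (Finset.mem_univ i))
    simpa [hfib] using this
  have hS1sum : S1.card = ∑ m ∈ L, (if (fib m).card = 1 then 1 else 0) := by
    rw [hS1, Finset.card_filter]
  have hlow : 2 * L.card ≤ n + S1.card := by
    rw [hsum, hS1sum, ← Finset.sum_add_distrib]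
    have : 2 * L.card = ∑ _m ∈ L, 2 := by simp [mul_comm]
    rw [this]
    apply Finset.sum_le_sum
    intro m hm
    have hne : (fib m).Nonempty := by
      obtain ⟨i, _, rfl⟩ := Finset.mem_image.mp hm
      exact ⟨i, by simp [hfib]⟩
    have hpos : 1 ≤ (fib m).card := Finset.card_pos.mpr hne
    by_cases h1 : (fib m).card = 1
    · simp [h1]
    · have : 2 ≤ (fib m).card := by omega
      simp [h1]; omega
  rw [hcost]
  calc 2 * L.card ≤ n + S1.card := hlow
    _ ≤ 2 ^ d * k + k := Nat.add_le_add hn_le hs1k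
    _ = (2 ^ d + 1) * k := by ring
end

section
/- Let d ≥ 1, let (p₁,…,p_k) be a finite sequence of pairwise distinct points of ℝ^d, and consider any greedy-consistent online clustering of it. Then for every set P ⊆ ℝ^d of L∞-diameter at most 1, at most one label of the final labeling is a singleton label (a label used by exactly one index) whose unique point lies in P. -/
lemma label_prefix_append {d : ℕ} (A : OnlineClustering d) :
    ∀ (t l : List (Fin d → ℝ)), A.label l <+: A.label (l ++ t)
  | [], l => by simp
  | p :: t, l => by
    have h1 := A.consistent l p
    have h2 := label_prefix_append A t (l ++ [p])
    rw [List.append_assoc] at h2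
    simpa using h1.trans h2

lemma label_prefix {d : ℕ} (A : OnlineClustering d) {l σ : List (Fin d → ℝ)}
    (h : l <+: σ) : A.label l <+: A.label σ := by
  obtain ⟨t, rfl⟩ := h
  exact label_prefix_append A t l

lemma mem_zip_of_getElem {d : ℕ} (A : OnlineClustering d) (σ : List (Fin d → ℝ))
    (j : ℕ) (hj : j < σ.length) (hjL : j < (A.label σ).length) :
    (σ[j], (A.label σ)[j]) ∈ σ.zip (A.label σ) := by
  have hz : j < (σ.zip (A.label σ)).length := by
    rw [List.length_zip]; omega
  rw [List.mem_iff_getElem]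
  exact ⟨j, hz, List.getElem_zip⟩

/-- Core case: if the point of the second singleton label arrives strictly later,
we get a contradiction. -/
lemma aux_case {d : ℕ} (σ : List (Fin d → ℝ)) (hnd : σ.Nodup)
    (A : OnlineClustering d) (hA : GreedyOn A σ)
    (P : Set (Fin d → ℝ)) (hP : ∀ x ∈ P, ∀ y ∈ P, dist x y ≤ 1)
    (m₁ m₂ : ℕ) (x₁ x₂ : Fin d → ℝ) (h₁P : x₁ ∈ P) (h₂P : x₂ ∈ P)
    (h₁u : ∀ q, (q, m₁) ∈ σ.zip (A.label σ) → q = x₁)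
    (h₂u : ∀ q, (q, m₂) ∈ σ.zip (A.label σ) → q = x₂)
    (i₁ i₂ : ℕ) (hi₁ : i₁ < σ.length) (hi₂ : i₂ < σ.length)
    (hL₁ : i₁ < (A.label σ).length) (hL₂ : i₂ < (A.label σ).length)
    (hx₁ : σ[i₁] = x₁) (hm₁ : (A.label σ)[i₁] = m₁)
    (hx₂ : σ[i₂] = x₂) (hm₂ : (A.label σ)[i₂] = m₂)
    (hlt : i₁ < i₂) : False := by
  set l := σ.take i₂ with hl
  have hlen : l.length = i₂ := by simp [hl, le_of_lt hi₂]
  have hlp : l <+: σ := List.take_prefix _ _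
  have hLlen : (A.label l).length = i₂ := by rw [A.length_eq, hlen]
  have hLp : A.label l <+: A.label σ := label_prefix A hlp
  -- l ++ [x₂] = σ.take (i₂ + 1)
  have htake : l ++ [x₂] = σ.take (i₂ + 1) := by
    rw [List.take_succ, List.getElem?_eq_getElem hi₂, hx₂]
    rfl
  have hpre : l ++ [x₂] <+: σ := htake ▸ List.take_prefix _ _
  have hLp' : A.label (l ++ [x₂]) <+: A.label σ := label_prefix A hpre
  have hLlen' : (A.label (l ++ [x₂])).length = i₂ + 1 := by
    rw [A.length_eq]; simp [hlen]
  -- membership transfer from prefix zip to full zip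
  have hzip : ∀ q m, (q, m) ∈ l.zip (A.label l) → (q, m) ∈ σ.zip (A.label σ) := by
    intro q m hq
    obtain ⟨t, ht⟩ := hlp
    obtain ⟨T, hT⟩ := hLp
    have : σ.zip (A.label σ) = l.zip (A.label l) ++ t.zip T := by
      rw [← hT, ← ht, List.zip_append (show l.length = (A.label l).length by rw [A.length_eq])]
    rw [this]
    exact List.mem_append_left _ hq
  -- the new label is m₂
  have hgetD : (A.label (l ++ [x₂])).getD l.length 0 = m₂ := by
    have h2 : i₂ < (A.label (l ++ [x₂])).length := by omega
    rw [hlen, List.getD_eq_getElem _ _ h2, hLp'.getElem h2, hm₂]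
  -- m₂ is not used before
  have hnew : (A.label (l ++ [x₂])).getD l.length 0 ∉ A.label l := by
    rw [hgetD]
    intro hmem
    obtain ⟨j, hj, hjm⟩ := List.mem_iff_getElem.mp hmem
    have hj2 : j < i₂ := by omega
    have hjσ : j < σ.length := lt_trans hj2 hi₂
    have hjL : j < (A.label σ).length := by rw [A.length_eq]; exact hjσ
    have hjm' : (A.label σ)[j] = m₂ := by rw [← hLp.getElem hj, hjm]
    have hmem' : (σ[j], m₂) ∈ σ.zip (A.label σ) := by
      rw [← hjm']; exact mem_zip_of_getElem A σ j hjσ hjL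
    have hq : σ[j] = x₂ := h₂u _ hmem'
    have : σ[j] = σ[i₂] := by rw [hq, hx₂]
    have : j = i₂ := (hnd.getElem_inj_iff).mp this
    omega
  -- m₁ is used before
  have hm₁mem : m₁ ∈ A.label l := by
    have h1 : i₁ < (A.label l).length := by omega
    rw [List.mem_iff_getElem]
    exact ⟨i₁, h1, by rw [hLp.getElem h1, hm₁]⟩
  -- apply greediness
  obtain ⟨x, hx, y, hy, hxy⟩ := hA l x₂ hpre hnew m₁ hm₁mem
  -- both x and y belong to P
  have key : ∀ z, z ∈ insert x₂ {q | (q, m₁) ∈ l.zip (A.label l)} → z ∈ P := by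
    intro z hz
    rcases hz with hz | hz
    · rwa [hz]
    · have := h₁u z (hzip z m₁ hz)
      rwa [this]
  exact absurd (hP x (key x hx) y (key y hy)) (not_le.mpr hxy)

/-- For any greedy-consistent online clustering of a sequence of pairwise distinct
points and any set `P ⊆ ℝ^d` of L∞-diameter at most 1, at most one label of the final
labeling is a singleton label whose unique point lies in `P`. -/
theorem stmt_16 (d : ℕ) (hd : 1 ≤ d) (σ : List (Fin d → ℝ)) (hnd : σ.Nodup)
    (A : OnlineClustering d) (hA : GreedyOn A σ)
    (P : Set (Fin d → ℝ)) (hP : ∀ x ∈ P, ∀ y ∈ P, dist x y ≤ 1)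
    (m₁ m₂ : ℕ) (x₁ x₂ : Fin d → ℝ)
    (h₁ : (x₁, m₁) ∈ σ.zip (A.label σ)) (h₁P : x₁ ∈ P)
    (h₁u : ∀ q, (q, m₁) ∈ σ.zip (A.label σ) → q = x₁)
    (h₂ : (x₂, m₂) ∈ σ.zip (A.label σ)) (h₂P : x₂ ∈ P)
    (h₂u : ∀ q, (q, m₂) ∈ σ.zip (A.label σ) → q = x₂) :
    m₁ = m₂ := by
  obtain ⟨i₁, hz₁, he₁⟩ := List.mem_iff_getElem.mp h₁
  obtain ⟨i₂, hz₂, he₂⟩ := List.mem_iff_getElem.mp h₂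
  rw [List.length_zip] at hz₁ hz₂
  have hi₁ : i₁ < σ.length := lt_of_lt_of_le hz₁ (min_le_left _ _)
  have hi₂ : i₂ < σ.length := lt_of_lt_of_le hz₂ (min_le_left _ _)
  have hL₁ : i₁ < (A.label σ).length := lt_of_lt_of_le hz₁ (min_le_right _ _)
  have hL₂ : i₂ < (A.label σ).length := lt_of_lt_of_le hz₂ (min_le_right _ _)
  have he₁' : σ[i₁] = x₁ ∧ (A.label σ)[i₁] = m₁ := by
    have := he₁; rw [List.getElem_zip] at this
    exact ⟨congrArg Prod.fst this, congrArg Prod.snd this⟩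
  have he₂' : σ[i₂] = x₂ ∧ (A.label σ)[i₂] = m₂ := by
    have := he₂; rw [List.getElem_zip] at this
    exact ⟨congrArg Prod.fst this, congrArg Prod.snd this⟩
  rcases lt_trichotomy i₁ i₂ with h | h | h
  · exact (aux_case σ hnd A hA P hP m₁ m₂ x₁ x₂ h₁P h₂P h₁u h₂u
      i₁ i₂ hi₁ hi₂ hL₁ hL₂ he₁'.1 he₁'.2 he₂'.1 he₂'.2 h).elim
  · rw [← he₁'.2, ← he₂'.2]; congr 1
  · exact (aux_case σ hnd A hA P hP m₂ m₁ x₂ x₁ h₂P h₁P h₂u h₁u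
      i₂ i₁ hi₂ hi₁ hL₂ hL₁ he₂'.1 he₂'.2 he₁'.1 he₁'.2 h).elim
end

section
/- Let d ≥ 1 and let K be a positive integer multiple of 4, with A, B, C, D as defined. Enumerate D = {v₁,…,v_N} arbitrarily, where N = |D| = 2^d·(K/4)^d, and for each t let u_t be the unique point of B with ‖u_t − v_t‖∞ ≤ 1. Present to the algorithm the sequence u₁, v₁, u₂, v₂, …, u_N, v_N (these 2N points are pairwise distinct). Then every greedy-consistent online clustering of this sequence uses exactly N = 2^d·(K/4)^d labels. (Since the offline optimum for B ∪ D is (K/4+1)^d + (K/4)^d, this shows the competitive ratio of the greedy algorithm for Unit Clustering in ℤ^d under L∞ is at least 2^{d−1}.) -/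
/-- The canonical embedding `ℤ^d → ℝ^d`. -/
def toR {d : ℕ} (z : Fin d → ℤ) : Fin d → ℝ := fun j => (z j : ℝ)

/-- Let `K` be a positive multiple of 4, `A = (4ℤ)^d ∩ [0,K]^d`, `B = A + {0,1}^d`,
`C = (4ℤ + 2)^d ∩ [0,K]^d`, `D = C + {0,1}^d`.  Enumerate `D = {v₁,…,v_N}` with
`N = |D| = 2^d (K/4)^d`, and let `u_t ∈ B` be the unique point of `B` with
`‖u_t - v_t‖_∞ ≤ 1`.  Then the sequence `u₁,v₁,…,u_N,v_N` consists of pairwise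
distinct points, and every greedy-consistent online clustering of it uses exactly
`N` labels.  (Hence greedy has ratio at least `2^{d-1}` on `ℤ^d` under L∞.) -/
theorem stmt_17 (d K : ℕ) (hd : 1 ≤ d) (hKpos : 0 < K) (hK4 : K % 4 = 0)
    (SA SB SC SD : Set (Fin d → ℤ))
    (hSA : SA = {x | ∀ j, 0 ≤ x j ∧ x j ≤ (K : ℤ) ∧ x j % 4 = 0})
    (hSB : SB = {y | ∃ x ∈ SA, ∃ e : Fin d → ℤ, (∀ j, e j = 0 ∨ e j = 1) ∧ y = x + e})
    (hSC : SC = {x | ∀ j, 0 ≤ x j ∧ x j ≤ (K : ℤ) ∧ x j % 4 = 2})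
    (hSD : SD = {y | ∃ x ∈ SC, ∃ e : Fin d → ℤ, (∀ j, e j = 0 ∨ e j = 1) ∧ y = x + e})
    (N : ℕ) (hN : N = 2 ^ d * (K / 4) ^ d)
    (v : Fin N → (Fin d → ℤ)) (hvinj : Function.Injective v)
    (hvD : ∀ t, v t ∈ SD) (hvsurj : ∀ y ∈ SD, ∃ t, v t = y)
    (u : Fin N → (Fin d → ℤ))
    (hu : ∀ t, u t ∈ SB ∧ ∀ j, |u t j - v t j| ≤ 1)
    (σ : List (Fin d → ℝ))
    (hσ : σ = (List.finRange N).flatMap (fun t => [toR (u t), toR (v t)]))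
    (A : OnlineClustering d) (hgr : GreedyOn A σ) :
    σ.Nodup ∧ (A.label σ).toFinset.card = N := by
  -- residue facts
  have hures : ∀ (t : Fin N) (j : Fin d), u t j % 4 = 0 ∨ u t j % 4 = 1 := by
    intro t j
    have h := (hu t).1
    rw [hSB] at h
    obtain ⟨x, hx, e, he, hy⟩ := h
    rw [hSA] at hx
    have h1 := (hx j).2.2
    have h2 := he j
    have h3 : u t j = x j + e j := by rw [hy]; rfl
    omega
  have hvres : ∀ (t : Fin N) (j : Fin d), v t j % 4 = 2 ∨ v t j % 4 = 3 := by
    intro t j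
    have h := hvD t
    rw [hSD] at h
    obtain ⟨x, hx, e, he, hy⟩ := h
    rw [hSC] at hx
    have h1 := (hx j).2.2
    have h2 := he j
    have h3 : v t j = x j + e j := by rw [hy]; rfl
    omega
  have hudet : ∀ a b : Fin N, u a = u b → a = b := by
    intro a b hab
    apply hvinj
    funext j
    have h1 := hures a j
    have h2 := hvres a j
    have h3 := hvres b j
    have h4 := (hu a).2 j
    have h5 := (hu b).2 j
    have h6 : u a j = u b j := congrFun hab j
    rw [abs_le] at h4 h5
    omega
  have hfar : ∀ a b : Fin N, a ≠ b → ∃ j, 2 ≤ |u a j - v b j| := by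
    intro a b hne
    by_contra hcon
    push_neg at hcon
    apply hne
    apply hudet
    funext j
    have h1 := hures a j
    have h1' := hures b j
    have h2 := hvres b j
    have h4 := (hu b).2 j
    have h5 := hcon j
    rw [abs_le] at h4
    rw [abs_lt] at h5
    omega
  have hdle : ∀ t : Fin N, dist (toR (u t)) (toR (v t)) ≤ 1 := by
    intro t
    rw [dist_pi_le_iff zero_le_one]
    intro j
    rw [Real.dist_eq]
    have h := (hu t).2 j
    show |((u t j : ℝ)) - ((v t j : ℝ))| ≤ 1
    exact_mod_cast h
  have hdgt : ∀ a b : Fin N, a ≠ b → 1 < dist (toR (u a)) (toR (v b)) := by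
    intro a b hne
    obtain ⟨j, hj⟩ := hfar a b hne
    have h1 : dist (toR (u a) j) (toR (v b) j) ≤ dist (toR (u a)) (toR (v b)) :=
      dist_le_pi_dist _ _ j
    have h2 : (2 : ℝ) ≤ dist (toR (u a) j) (toR (v b) j) := by
      rw [Real.dist_eq]
      show (2:ℝ) ≤ |((u a j : ℝ)) - ((v b j : ℝ))|
      exact_mod_cast hj
    linarith
  have huv : ∀ a b : Fin N, u a ≠ v b := by
    intro a b h
    have h1 := hures a ⟨0, hd⟩
    have h2 := hvres b ⟨0, hd⟩
    rw [h] at h1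
    omega
  have htoR : ∀ x y : Fin d → ℤ, toR x = toR y → x = y := by
    intro x y h
    funext j
    have h2 : ((x j : ℤ) : ℝ) = ((y j : ℤ) : ℝ) := congrFun h j
    exact_mod_cast h2
  -- list machinery
  have hσlen : σ.length = 2 * N := by
    rw [hσ, List.length_flatMap]
    simp [Function.comp_def, mul_comm]
  have hmono : ∀ (l r : List (Fin d → ℝ)), A.label l <+: A.label (l ++ r) := by
    intro l r
    induction r using List.reverseRecOn with
    | nil => simp
    | append_singleton r p ih =>
      rw [← List.append_assoc]
      exact ih.trans (A.consistent (l ++ r) p)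
  have hpreflab : ∀ l, l <+: σ → A.label l = (A.label σ).take l.length := by
    rintro l ⟨r, hr⟩
    have h1 : A.label l <+: A.label σ := by rw [← hr]; exact hmono l r
    have h2 := List.prefix_iff_eq_take.mp h1
    rw [A.length_eq] at h2
    exact h2
  have hlablen : (A.label σ).length = 2 * N := by rw [A.length_eq, hσlen]
  have hLtlen : ∀ t, t ≤ N →
      (((List.finRange N).take t).flatMap (fun s => [toR (u s), toR (v s)])).length = 2 * t := by
    intro t ht
    rw [List.length_flatMap]
    simp [Function.comp_def, mul_comm]
    omega
  have hdecomp : ∀ t (ht : t < N), σ =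
      (((List.finRange N).take t).flatMap (fun s => [toR (u s), toR (v s)])) ++
      (toR (u ⟨t, ht⟩) :: toR (v ⟨t, ht⟩) ::
        (((List.finRange N).drop (t+1)).flatMap (fun s => [toR (u s), toR (v s)]))) := by
    intro t ht
    conv_lhs => rw [hσ, ← List.take_append_drop t (List.finRange N)]
    rw [List.flatMap_append, List.drop_eq_getElem_cons (by simpa using ht)]
    simp
  have hgetu : ∀ t (ht : t < N) (h : 2*t < σ.length), σ[2*t] = toR (u ⟨t, ht⟩) := by
    intro t ht h
    have hl := hLtlen t (le_of_lt ht)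
    rw [List.getElem_of_eq (hdecomp t ht) h, List.getElem_append_right (by omega)]
    simp [hl]
  have hgetv : ∀ t (ht : t < N) (h : 2*t+1 < σ.length), σ[2*t+1] = toR (v ⟨t, ht⟩) := by
    intro t ht h
    have hl := hLtlen t (le_of_lt ht)
    rw [List.getElem_of_eq (hdecomp t ht) h, List.getElem_append_right (by omega)]
    simp [hl, show 2*t+1 - 2*t = 1 by omega]
  have hmemzip : ∀ (l : List (Fin d → ℝ)) (i : ℕ) (h : i < l.length),
      (l[i], (A.label l).getD i 0) ∈ l.zip (A.label l) := by
    intro l i h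
    have h' : i < (A.label l).length := by rw [A.length_eq]; exact h
    rw [List.getD_eq_getElem _ _ h']
    have hz : i < (l.zip (A.label l)).length := by rw [List.length_zip]; omega
    have hh := List.getElem_zip (l := l) (l' := A.label l) (i := i) (h := hz)
    rw [← hh]
    exact List.getElem_mem hz
  have hzipmem : ∀ (l : List (Fin d → ℝ)) (p : Fin d → ℝ) (m : ℕ),
      (p, m) ∈ l.zip (A.label l) →
      ∃ i, ∃ (h : i < l.length), l[i] = p ∧ (A.label l).getD i 0 = m := by
    intro l p m hm
    obtain ⟨i, hi, he⟩ := List.mem_iff_getElem.mp hm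
    rw [List.getElem_zip] at he
    have h1 : i < l.length := by
      rw [List.length_zip, A.length_eq] at hi; omega
    have h2 : i < (A.label l).length := by rw [A.length_eq]; omega
    refine ⟨i, h1, (Prod.ext_iff.mp he).1, ?_⟩
    rw [List.getD_eq_getElem _ _ h2]
    exact (Prod.ext_iff.mp he).2
  have hgetDpref : ∀ (l : List (Fin d → ℝ)), l <+: σ → ∀ i, i < l.length →
      (A.label l).getD i 0 = (A.label σ).getD i 0 := by
    intro l hl i hi
    have hlen : l.length ≤ 2 * N := by
      have := hl.length_le; omega
    rw [hpreflab l hl, List.getD_eq_getElem _ _ (by rw [List.length_take]; omega),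
      List.getElem_take, List.getD_eq_getElem _ _ (by omega)]
  have htakesucc : ∀ n (h : n < σ.length), σ.take (n+1) = σ.take n ++ [σ[n]] := by
    intro n h
    rw [List.take_succ, List.getElem?_eq_getElem h]
    simp
  -- main induction
  have main : ∀ t (ht : t < N),
      (A.label σ).getD (2*t+1) 0 = (A.label σ).getD (2*t) 0 ∧
      ∀ i < 2*t, (A.label σ).getD i 0 ≠ (A.label σ).getD (2*t) 0 := by
    intro t
    induction t using Nat.strong_induction_on with
    | _ t ih =>
    intro ht
    have hc : ∀ i < 2*t, (A.label σ).getD i 0 ≠ (A.label σ).getD (2*t) 0 := by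
      intro i hi heq
      obtain ⟨s, hio, hst⟩ : ∃ s, (i = 2*s ∨ i = 2*s+1) ∧ s < t := ⟨i/2, by omega, by omega⟩
      have hsN : s < N := lt_trans hst ht
      have hvlab : (A.label σ).getD (2*s+1) 0 = (A.label σ).getD i 0 := by
        rcases hio with rfl | rfl
        · exact (ih s hst hsN).1
        · rfl
      have m1 := hmemzip σ (2*t) (by omega)
      have m2 := hmemzip σ (2*s+1) (by omega)
      rw [hgetu t ht (by omega)] at m1
      rw [hgetv s hsN (by omega)] at m2
      rw [hvlab, heq] at m2
      have hval := A.valid σ _ _ _ m1 m2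
      have := hdgt ⟨t, ht⟩ ⟨s, hsN⟩ (by simp [Fin.ext_iff]; omega)
      linarith
    refine ⟨?_, hc⟩
    by_contra hne
    set p : Fin d → ℝ := toR (v ⟨t, ht⟩) with hp
    set l : List (Fin d → ℝ) := σ.take (2*t+1) with hl
    have hlpre : l <+: σ := List.take_prefix _ _
    have hllen : l.length = 2*t+1 := by rw [hl, List.length_take]; omega
    have hstep : l ++ [p] = σ.take (2*t+2) := by
      rw [hl, hp, show 2*t+2 = (2*t+1)+1 by ring, htakesucc (2*t+1) (by omega),
        hgetv t ht (by omega)]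
    have hpre2 : l ++ [p] <+: σ := by rw [hstep]; exact List.take_prefix _ _
    have hgd : (A.label (l ++ [p])).getD l.length 0 = (A.label σ).getD (2*t+1) 0 := by
      rw [hgetDpref _ hpre2 l.length (by simp), hllen]
    -- membership translation for labels of l
    have hlabmem : ∀ m, m ∈ A.label l ↔ ∃ i < 2*t+1, (A.label σ).getD i 0 = m := by
      intro m
      rw [hpreflab l hlpre, hllen]
      constructor
      · intro hm
        obtain ⟨i, hi, he⟩ := List.mem_iff_getElem.mp hm
        rw [List.getElem_take] at he
        have hi' : i < 2*t+1 := by rw [List.length_take] at hi; omega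
        refine ⟨i, hi', ?_⟩
        rw [List.getD_eq_getElem _ _ (by omega)]
        exact he
      · rintro ⟨i, hi, he⟩
        rw [List.mem_iff_getElem]
        refine ⟨i, by rw [List.length_take]; omega, ?_⟩
        rw [List.getElem_take]
        rw [List.getD_eq_getElem _ _ (by omega)] at he
        exact he
    by_cases hnew : (A.label (l ++ [p])).getD l.length 0 ∈ A.label l
    · -- v_t got an old label: contradiction
      rw [hgd, hlabmem] at hnew
      obtain ⟨i, hi, he⟩ := hnew
      rcases Nat.lt_or_ge i (2*t) with hilt | hige
      · -- label equals some u_s label, s < t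
        obtain ⟨s, hio, hst⟩ : ∃ s, (i = 2*s ∨ i = 2*s+1) ∧ s < t := ⟨i/2, by omega, by omega⟩
        have hsN : s < N := lt_trans hst ht
        have hulab : (A.label σ).getD (2*s) 0 = (A.label σ).getD i 0 := by
          rcases hio with rfl | rfl
          · rfl
          · exact ((ih s hst hsN).1).symm
        have m1 := hmemzip σ (2*s) (by omega)
        have m2 := hmemzip σ (2*t+1) (by omega)
        rw [hgetu s hsN (by omega)] at m1
        rw [hgetv t ht (by omega)] at m2
        rw [hulab, he] at m1
        have hval := A.valid σ _ _ _ m1 m2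
        have := hdgt ⟨s, hsN⟩ ⟨t, ht⟩ (by simp [Fin.ext_iff]; omega)
        linarith
      · -- i = 2t : contradicts hne
        have : i = 2*t := by omega
        subst this
        exact hne he.symm
    · -- v_t got a new label: contradicts greediness
      have hmem : (A.label σ).getD (2*t) 0 ∈ A.label l := by
        rw [hlabmem]; exact ⟨2*t, by omega, rfl⟩
      obtain ⟨x, hx, y, hy, hdxy⟩ := hgr l p hpre2 hnew _ hmem
      have hsub : ∀ z, z ∈ insert p {q | (q, (A.label σ).getD (2*t) 0) ∈ l.zip (A.label l)} →
          z = p ∨ z = toR (u ⟨t, ht⟩) := by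
        intro z hz
        rcases hz with rfl | hz
        · exact Or.inl rfl
        · obtain ⟨i, hi, hle, hlb⟩ := hzipmem l z _ hz
          rw [hgetDpref l hlpre i hi] at hlb
          have hi' : i < 2*t+1 := by omega
          rcases Nat.lt_or_ge i (2*t) with hilt | hige
          · exact absurd hlb (hc i hilt)
          · have : i = 2*t := by omega
            subst this
            right
            have h1 := List.getElem_of_eq hl hi
            have h2 : (List.take (2*t+1) σ)[2*t]'(by rw [List.length_take]; omega) =
                σ[2*t]'(by omega) := List.getElem_take
            rw [← hle, h1, h2]
            exact hgetu t ht (by omega)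
      have hle1 : dist x y ≤ 1 := by
        have h1 : dist p (toR (u ⟨t, ht⟩)) ≤ 1 := by
          rw [hp, dist_comm]; exact hdle ⟨t, ht⟩
        rcases hsub x hx with rfl | rfl <;> rcases hsub y hy with rfl | rfl <;>
          simp [dist_comm] <;> linarith [h1, dist_comm p (toR (u ⟨t, ht⟩))]
      linarith
  constructor
  · -- Nodup
    rw [List.nodup_iff_injective_get]
    intro i j hij
    obtain ⟨i, hi⟩ := i
    obtain ⟨j, hj⟩ := j
    simp only [List.get_eq_getElem] at hij
    apply Fin.ext
    simp only
    obtain ⟨s, hio, hsN⟩ : ∃ s, (i = 2*s ∨ i = 2*s+1) ∧ s < N := ⟨i/2, by omega, by omega⟩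
    obtain ⟨r, hjo, hrN⟩ : ∃ r, (j = 2*r ∨ j = 2*r+1) ∧ r < N := ⟨j/2, by omega, by omega⟩
    rcases hio with rfl | rfl <;> rcases hjo with rfl | rfl
    · rw [hgetu s hsN (by omega), hgetu r hrN (by omega)] at hij
      have : (⟨s, hsN⟩ : Fin N) = ⟨r, hrN⟩ := hudet _ _ (htoR _ _ hij)
      simp only [Fin.mk.injEq] at this
      omega
    · rw [hgetu s hsN (by omega), hgetv r hrN (by omega)] at hij
      exact absurd (htoR _ _ hij) (huv _ _)
    · rw [hgetv s hsN (by omega), hgetu r hrN (by omega)] at hij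
      exact absurd (htoR _ _ hij.symm) (huv _ _)
    · rw [hgetv s hsN (by omega), hgetv r hrN (by omega)] at hij
      have : (⟨s, hsN⟩ : Fin N) = ⟨r, hrN⟩ := hvinj (htoR _ _ hij)
      simp only [Fin.mk.injEq] at this
      omega
  · -- card = N
    have himg : (A.label σ).toFinset =
        Finset.image (fun t : Fin N => (A.label σ).getD (2*t.val) 0) Finset.univ := by
      ext m
      simp only [List.mem_toFinset, Finset.mem_image, Finset.mem_univ, true_and]
      constructor
      · intro hm
        obtain ⟨i, hi, he⟩ := List.mem_iff_getElem.mp hm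
        have hi' : i < 2*N := by omega
        obtain ⟨s, hio, hsN⟩ : ∃ s, (i = 2*s ∨ i = 2*s+1) ∧ s < N := ⟨i/2, by omega, by omega⟩
        refine ⟨⟨s, hsN⟩, ?_⟩
        have hgd : (A.label σ).getD i 0 = m := by
          rw [List.getD_eq_getElem _ _ hi]; exact he
        rcases hio with rfl | rfl
        · exact hgd
        · rw [← (main s hsN).1]; exact hgd
      · rintro ⟨s, rfl⟩
        rw [List.getD_eq_getElem _ _ (by omega)]
        exact List.getElem_mem _
    rw [himg]
    rw [Finset.card_image_of_injective _ ?_, Finset.card_univ, Fintype.card_fin]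
    intro a b hab
    by_contra hne
    have hne' : a.val ≠ b.val := fun h => hne (Fin.ext h)
    rcases Nat.lt_or_ge a.val b.val with h | h
    · exact (main b.val b.isLt).2 (2*a.val) (by omega) hab
    · exact (main a.val a.isLt).2 (2*b.val) (by omega) hab.symm
end

section
/- Let d ≥ 1 and let K be a positive integer multiple of 4, with A, B, C, D as defined. Then for every v ∈ D there is exactly one u ∈ B with ‖u − v‖∞ ≤ 1; this u satisfies |u_j − v_j| = 1 for every coordinate j ∈ {1,…,d}; and the resulting map D → B sending v to its unique such u is injective. -/
lemma stmt_18_auxB (d K : ℕ) (hK4 : K % 4 = 0) (u : Fin d → ℤ) :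
    (∃ x ∈ {x : Fin d → ℤ | ∀ j, 0 ≤ x j ∧ x j ≤ (K : ℤ) ∧ x j % 4 = 0},
      ∃ e : Fin d → ℤ, (∀ j, e j = 0 ∨ e j = 1) ∧ u = x + e) ↔
    ∀ j, 0 ≤ u j ∧ u j ≤ (K : ℤ) + 1 ∧ (u j % 4 = 0 ∨ u j % 4 = 1) := by
  constructor
  · rintro ⟨x, hx, e, he, rfl⟩ j
    have h1 := hx j
    have h2 := he j
    simp only [Pi.add_apply]
    omega
  · intro h
    refine ⟨fun j => if u j % 4 = 0 then u j else u j - 1, fun j => ?_,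
      fun j => if u j % 4 = 0 then 0 else 1, fun j => ?_, ?_⟩
    · have := h j; dsimp only; split_ifs <;> omega
    · dsimp only; split_ifs <;> simp
    · funext j; simp only [Pi.add_apply]; split_ifs <;> ring
  
lemma stmt_18_auxD (d K : ℕ) (hK4 : K % 4 = 0) (v : Fin d → ℤ)
    (h : ∃ x ∈ {x : Fin d → ℤ | ∀ j, 0 ≤ x j ∧ x j ≤ (K : ℤ) ∧ x j % 4 = 2},
      ∃ e : Fin d → ℤ, (∀ j, e j = 0 ∨ e j = 1) ∧ v = x + e) :
    ∀ j, 2 ≤ v j ∧ v j ≤ (K : ℤ) - 1 ∧ (v j % 4 = 2 ∨ v j % 4 = 3) := by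
  obtain ⟨x, hx, e, he, rfl⟩ := h
  intro j
  have h1 := hx j
  have h2 := he j
  simp only [Pi.add_apply]
  omega

/-- Let `K` be a positive multiple of 4, `A = (4ℤ)^d ∩ [0,K]^d`, `B = A + {0,1}^d`,
`C = (4ℤ + 2)^d ∩ [0,K]^d`, `D = C + {0,1}^d`.  For every `v ∈ D` there is exactly
one `u ∈ B` with `‖u - v‖_∞ ≤ 1`; this `u` satisfies `|u_j - v_j| = 1` in every
coordinate; and the map `D → B` sending `v` to its unique such `u` is injective. -/
theorem stmt_18 (d K : ℕ) (hd : 1 ≤ d) (hKpos : 0 < K) (hK4 : K % 4 = 0)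
    (SA SB SC SD : Set (Fin d → ℤ))
    (hSA : SA = {x | ∀ j, 0 ≤ x j ∧ x j ≤ (K : ℤ) ∧ x j % 4 = 0})
    (hSB : SB = {y | ∃ x ∈ SA, ∃ e : Fin d → ℤ, (∀ j, e j = 0 ∨ e j = 1) ∧ y = x + e})
    (hSC : SC = {x | ∀ j, 0 ≤ x j ∧ x j ≤ (K : ℤ) ∧ x j % 4 = 2})
    (hSD : SD = {y | ∃ x ∈ SC, ∃ e : Fin d → ℤ, (∀ j, e j = 0 ∨ e j = 1) ∧ y = x + e}) :
    (∀ v ∈ SD, ∃! u : Fin d → ℤ, u ∈ SB ∧ ∀ j, |u j - v j| ≤ 1) ∧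
    (∀ v ∈ SD, ∀ u : Fin d → ℤ, u ∈ SB → (∀ j, |u j - v j| ≤ 1) →
      ∀ j, |u j - v j| = 1) ∧
    (∀ v₁ ∈ SD, ∀ v₂ ∈ SD, ∀ u : Fin d → ℤ,
      (u ∈ SB ∧ ∀ j, |u j - v₁ j| ≤ 1) → (u ∈ SB ∧ ∀ j, |u j - v₂ j| ≤ 1) →
      v₁ = v₂) := by
  subst hSA hSC hSB hSD
  have hB : ∀ u : Fin d → ℤ,
      u ∈ {y | ∃ x ∈ {x : Fin d → ℤ | ∀ j, 0 ≤ x j ∧ x j ≤ (K : ℤ) ∧ x j % 4 = 0},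
        ∃ e : Fin d → ℤ, (∀ j, e j = 0 ∨ e j = 1) ∧ y = x + e} ↔
      ∀ j, 0 ≤ u j ∧ u j ≤ (K : ℤ) + 1 ∧ (u j % 4 = 0 ∨ u j % 4 = 1) :=
    fun u => stmt_18_auxB d K hK4 u
  have hD : ∀ v : Fin d → ℤ,
      v ∈ {y | ∃ x ∈ {x : Fin d → ℤ | ∀ j, 0 ≤ x j ∧ x j ≤ (K : ℤ) ∧ x j % 4 = 2},
        ∃ e : Fin d → ℤ, (∀ j, e j = 0 ∨ e j = 1) ∧ y = x + e} →
      ∀ j, 2 ≤ v j ∧ v j ≤ (K : ℤ) - 1 ∧ (v j % 4 = 2 ∨ v j % 4 = 3) :=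
    fun v hv => stmt_18_auxD d K hK4 v hv
  refine ⟨?_, ?_, ?_⟩
  · intro v hv
    have hv' := hD v hv
    refine ⟨fun j => if v j % 4 = 2 then v j - 1 else v j + 1, ⟨?_, ?_⟩, ?_⟩
    · rw [hB]
      intro j
      have := hv' j
      split_ifs <;> omega
    · intro j
      dsimp only
      split_ifs <;> simp
    · rintro u ⟨hu, habs⟩
      rw [hB] at hu
      funext j
      have h1 := hu j
      have h2 := hv' j
      have h3 := habs j
      rw [abs_le] at h3
      split_ifs <;> omega
  · intro v hv u hu habs j
    rw [hB] at hu
    have h1 := hu j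
    have h2 := hD v hv j
    have h3 := habs j
    rw [abs_le] at h3
    have : u j - v j = 1 ∨ u j - v j = -1 := by omega
    rcases this with h | h <;> rw [h] <;> simp
  · rintro v₁ hv₁ v₂ hv₂ u ⟨hu, h1⟩ ⟨-, h2⟩
    rw [hB] at hu
    funext j
    have ha := hu j
    have hb := hD v₁ hv₁ j
    have hc := hD v₂ hv₂ j
    have hd1 := h1 j
    have hd2 := h2 j
    rw [abs_le] at hd1 hd2
    omega
end

section
/- Let d ≥ 1 and let K be a positive integer multiple of 4, with A, B, C, D as defined. Then the minimum number of parts in a partition of B ∪ D into sets of L∞-diameter at most 1 equals |A| + |C| = (K/4 + 1)^d + (K/4)^d. -/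
/-- Anchor of a point: round each coordinate down to an even integer. -/
def anchor19 (d : ℕ) (x : Fin d → ℤ) : Fin d → ℤ := fun j => 2 * (x j / 2)

/-- Index type for the clusters. -/
abbrev Idx19 (d K : ℕ) := (Fin d → Fin (K / 4 + 1)) ⊕ (Fin d → Fin (K / 4))

/-- The anchor point corresponding to an index. -/
def gIdx (d K : ℕ) : Idx19 d K → (Fin d → ℤ) :=
  Sum.elim (fun f j => 4 * ((f j : ℕ) : ℤ)) (fun f j => 4 * ((f j : ℕ) : ℤ) + 2)

/-- Parametrization of all points of `B ∪ D`. -/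
def hPt (d K : ℕ) : Idx19 d K × (Fin d → Bool) → (Fin d → ℤ) :=
  fun p j => gIdx d K p.1 j + (if p.2 j then 1 else 0)

lemma gIdx_even (d K : ℕ) (s : Idx19 d K) (j : Fin d) : gIdx d K s j % 2 = 0 := by
  rcases s with f | f <;> simp only [gIdx, Sum.elim_inl, Sum.elim_inr] <;> omega

lemma anchor_hPt (d K : ℕ) (p : Idx19 d K × (Fin d → Bool)) :
    anchor19 d (hPt d K p) = gIdx d K p.1 := by
  funext j
  have hv := gIdx_even d K p.1 j
  have he : (if p.2 j then (1:ℤ) else 0) = 0 ∨ (if p.2 j then (1:ℤ) else 0) = 1 := by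
    rcases p.2 j <;> simp
  simp only [anchor19, hPt]
  omega

lemma gIdx_inj (d K : ℕ) (hd : 1 ≤ d) : Function.Injective (gIdx d K) := by
  rintro (f | f) (f' | f') h
  · simp only [Sum.inl.injEq]
    funext j
    have h1 := congrFun h j
    simp only [gIdx, Sum.elim_inl] at h1
    exact Fin.ext (by omega)
  · exfalso
    have h1 := congrFun h ⟨0, hd⟩
    simp only [gIdx, Sum.elim_inl, Sum.elim_inr] at h1
    omega
  · exfalso
    have h1 := congrFun h ⟨0, hd⟩
    simp only [gIdx, Sum.elim_inl, Sum.elim_inr] at h1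
    omega
  · simp only [Sum.inr.injEq]
    funext j
    have h1 := congrFun h j
    simp only [gIdx, Sum.elim_inr] at h1
    exact Fin.ext (by omega)

lemma hPt_inj (d K : ℕ) (hd : 1 ≤ d) : Function.Injective (hPt d K) := by
  rintro ⟨s, b⟩ ⟨s', b'⟩ h
  have h1 : gIdx d K s = gIdx d K s' := by
    have := anchor_hPt d K (s, b)
    have h2 := anchor_hPt d K (s', b')
    rw [← this, ← h2, h]
  have h2 : s = s' := gIdx_inj d K hd h1
  subst h2
  have h3 : b = b' := by
    funext j
    have h4 := congrFun h j
    simp only [hPt] at h4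
    rcases hb : b j <;> rcases hb' : b' j <;> simp [hb, hb'] at h4 ⊢
  rw [h3]

/-- Let `K` be a positive multiple of 4, `A = (4ℤ)^d ∩ [0,K]^d`, `B = A + {0,1}^d`,
`C = (4ℤ + 2)^d ∩ [0,K]^d`, `D = C + {0,1}^d`.  Then the minimum number of parts in a
partition of `B ∪ D` into sets of L∞-diameter at most 1 equals
`|A| + |C| = (K/4 + 1)^d + (K/4)^d`. -/
theorem stmt_19 (d K : ℕ) (hd : 1 ≤ d) (hKpos : 0 < K) (hK4 : K % 4 = 0)
    (SA SB SC SD : Set (Fin d → ℤ))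
    (hSA : SA = {x | ∀ j, 0 ≤ x j ∧ x j ≤ (K : ℤ) ∧ x j % 4 = 0})
    (hSB : SB = {y | ∃ x ∈ SA, ∃ e : Fin d → ℤ, (∀ j, e j = 0 ∨ e j = 1) ∧ y = x + e})
    (hSC : SC = {x | ∀ j, 0 ≤ x j ∧ x j ≤ (K : ℤ) ∧ x j % 4 = 2})
    (hSD : SD = {y | ∃ x ∈ SC, ∃ e : Fin d → ℤ, (∀ j, e j = 0 ∨ e j = 1) ∧ y = x + e}) :
    sInf {k | IsClusterPartition d (toR '' (SB ∪ SD)) k}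
      = (K / 4 + 1) ^ d + (K / 4) ^ d := by
  classical
  set N := (K / 4 + 1) ^ d + (K / 4) ^ d with hNdef
  set S := toR '' (SB ∪ SD) with hSdef
  have hcardIdx : Fintype.card (Idx19 d K) = N := by
    simp [Idx19, Fintype.card_fun, hNdef]
  have htoR_inj : Function.Injective (toR (d := d)) := by
    intro x y h
    funext j
    have h1 := congrFun h j
    simp only [toR] at h1
    exact_mod_cast h1
  -- range characterization of B ∪ D
  have hrange : ∀ x, x ∈ SB ∪ SD ↔ ∃ p : Idx19 d K × (Fin d → Bool), hPt d K p = x := by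
    intro x
    constructor
    · rintro (hx | hx)
      · rw [hSB] at hx
        obtain ⟨a, ha, e, he, rfl⟩ := hx
        rw [hSA] at ha
        refine ⟨⟨Sum.inl fun j => ⟨(a j).toNat / 4, ?_⟩, fun j => decide (e j = 1)⟩, ?_⟩
        · obtain ⟨h0, h1, h2⟩ := ha j
          omega
        · funext j
          obtain ⟨h0, h1, h2⟩ := ha j
          simp only [hPt, gIdx, Sum.elim_inl, Pi.add_apply]
          rcases he j with h | h <;> simp [h] <;> omega
      · rw [hSD] at hx
        obtain ⟨a, ha, e, he, rfl⟩ := hx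
        rw [hSC] at ha
        refine ⟨⟨Sum.inr fun j => ⟨(a j).toNat / 4, ?_⟩, fun j => decide (e j = 1)⟩, ?_⟩
        · obtain ⟨h0, h1, h2⟩ := ha j
          omega
        · funext j
          obtain ⟨h0, h1, h2⟩ := ha j
          simp only [hPt, gIdx, Sum.elim_inr, Pi.add_apply]
          rcases he j with h | h <;> simp [h] <;> omega
    · rintro ⟨⟨s, b⟩, rfl⟩
      rcases s with f | f
      · left
        rw [hSB]
        refine ⟨fun j => 4 * ((f j : ℕ) : ℤ), ?_, fun j => if b j then 1 else 0,
          fun j => by rcases b j <;> simp, ?_⟩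
        · rw [hSA]
          intro j
          have h5 := (f j).isLt
          show (0:ℤ) ≤ 4 * ((f j : ℕ) : ℤ) ∧ 4 * ((f j : ℕ) : ℤ) ≤ (K:ℤ) ∧
            (4 * ((f j : ℕ) : ℤ)) % 4 = 0
          omega
        · funext j
          simp [hPt, gIdx]
      · right
        rw [hSD]
        refine ⟨fun j => 4 * ((f j : ℕ) : ℤ) + 2, ?_, fun j => if b j then 1 else 0,
          fun j => by rcases b j <;> simp, ?_⟩
        · rw [hSC]
          intro j
          have h5 := (f j).isLt
          show (0:ℤ) ≤ 4 * ((f j : ℕ) : ℤ) + 2 ∧ 4 * ((f j : ℕ) : ℤ) + 2 ≤ (K:ℤ) ∧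
            (4 * ((f j : ℕ) : ℤ) + 2) % 4 = 2
          omega
        · funext j
          simp [hPt, gIdx]
  -- points with the same anchor that lie in B ∪ D are within 1 of each other
  have hclose : ∀ x y : Fin d → ℤ, anchor19 d x = anchor19 d y → dist (toR x) (toR y) ≤ 1 := by
    intro x y hxy
    refine (dist_pi_le_iff one_pos.le).mpr fun j => ?_
    have h1 := congrFun hxy j
    simp only [anchor19] at h1
    have h2 : -1 ≤ x j - y j ∧ x j - y j ≤ 1 := by omega
    rw [Real.dist_eq, abs_le]
    constructor
    · simp only [toR]
      exact_mod_cast h2.1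
    · simp only [toR]
      exact_mod_cast h2.2
  -- upper bound : there is a partition with N clusters
  let eqv : Fin N ≃ Idx19 d K := (Fintype.equivFinOfCardEq hcardIdx).symm
  have hmem : N ∈ {k | IsClusterPartition d S k} := by
    refine ⟨fun i => toR '' {x | x ∈ SB ∪ SD ∧ anchor19 d x = gIdx d K (eqv i)}, ?_, ?_, ?_, ?_⟩
    · intro i
      exact Set.image_mono fun x hx => hx.1
    · rintro p ⟨x, hx, rfl⟩
      obtain ⟨q, rfl⟩ := (hrange x).mp hx
      exact ⟨eqv.symm q.1, ⟨hPt d K q, ⟨hx, by rw [anchor_hPt, Equiv.apply_symm_apply]⟩, rfl⟩⟩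
    · intro i j hij
      rw [Set.disjoint_left]
      rintro p ⟨x, ⟨hx, hax⟩, rfl⟩ ⟨y, ⟨hy, hay⟩, hxy⟩
      have hxe : y = x := htoR_inj hxy
      subst hxe
      exact hij (eqv.injective (gIdx_inj d K hd (hax ▸ hay)))
    · rintro i _ ⟨x, ⟨hx, hax⟩, rfl⟩ _ ⟨y, ⟨hy, hay⟩, rfl⟩
      exact hclose x y (hax.trans hay.symm)
  -- lower bound
  have hlb : ∀ k ∈ {k | IsClusterPartition d S k}, N ≤ k := by
    intro k hk
    obtain ⟨P, hPsub, hPcov, hPdisj, hPdiam⟩ := hk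
    set T : Finset (Fin d → ℤ) := Finset.univ.image (hPt d K) with hT
    have hTcard : T.card = N * 2 ^ d := by
      rw [hT, Finset.card_image_of_injective _ (hPt_inj d K hd), Finset.card_univ,
        Fintype.card_prod, hcardIdx, Fintype.card_fun, Fintype.card_bool, Fintype.card_fin]
    have hmemT : ∀ x, x ∈ T ↔ x ∈ SB ∪ SD := by
      intro x
      rw [hT]
      simp only [Finset.mem_image, Finset.mem_univ, true_and]
      exact (hrange x).symm
    have hsub : T ⊆ Finset.univ.biUnion
        (fun i : Fin k => T.filter (fun x => toR x ∈ P i)) := by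
      intro x hx
      obtain ⟨i, hi⟩ := hPcov (toR x) ⟨x, (hmemT x).mp hx, rfl⟩
      exact Finset.mem_biUnion.mpr ⟨i, Finset.mem_univ i, Finset.mem_filter.mpr ⟨hx, hi⟩⟩
    have hflt : ∀ i : Fin k, (T.filter (fun x => toR x ∈ P i)).card ≤ 2 ^ d := by
      intro i
      have hcard : (T.filter (fun x => toR x ∈ P i)).card
          ≤ (Finset.univ : Finset (Fin d → Bool)).card := by
        refine Finset.card_le_card_of_injOn (fun x j => decide (x j % 2 = 1))
          (fun _ _ => Finset.mem_univ _) ?_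
        intro x hx y hy hxy
        simp only [Finset.coe_filter, Set.mem_setOf_eq] at hx hy
        have hdist := hPdiam i _ hx.2 _ hy.2
        funext j
        have h1 : dist (toR x j) (toR y j) ≤ 1 := (dist_pi_le_iff one_pos.le).mp hdist j
        rw [Real.dist_eq, abs_le] at h1
        simp only [toR] at h1
        have h2 : -1 ≤ x j - y j ∧ x j - y j ≤ 1 := by
          constructor <;> [exact_mod_cast h1.1; exact_mod_cast h1.2]
        have h3 := congrFun hxy j
        simp only [decide_eq_decide] at h3
        omega
      simpa [Fintype.card_fun] using hcard
    have hcount : T.card ≤ k * 2 ^ d := by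
      calc T.card ≤ (Finset.univ.biUnion
            (fun i : Fin k => T.filter (fun x => toR x ∈ P i))).card :=
          Finset.card_le_card hsub
        _ ≤ ∑ i : Fin k, (T.filter (fun x => toR x ∈ P i)).card := Finset.card_biUnion_le
        _ ≤ ∑ _i : Fin k, 2 ^ d := Finset.sum_le_sum fun i _ => hflt i
        _ = k * 2 ^ d := by simp [Finset.sum_const, Finset.card_univ, mul_comm]
    rw [hTcard] at hcount
    exact Nat.le_of_mul_le_mul_right hcount (Nat.pow_pos (n := d) (by norm_num))
  exact le_antisymm (Nat.sInf_le hmem) (le_csInf ⟨N, hmem⟩ hlb)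
end
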